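/- arXiv:1712.06310 — 9 statements merged into one kernel-verified Lean document; each statement's English description precedes it below -/
import Mathlib

section
/- Let A be an abelian category, and let C be a category with stabilisers (s_i, ι_i)_{i∈I} such that each ι_i admits a left inverse, i.e. a natural transformation π_i : s_i ⇒ id_C with π_i ∘ ι_i = id_{id_C}. Then for every functor T : C → A all four degrees coincide: wdeg(T) = deg(T) = ideg(T) = sdeg(T). -/
/-!
Statement 1: if each `ιᵢ` admits a left inverse `πᵢ : sᵢ ⟶ 𝟭 C`, then all four degrees coincide.

All four degrees take values in `{-1, 0, 1, …, ∞}`; we encode such a value `d` as the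
element `d + 1 : ℕ∞` (so `-1 ↦ 0`, `∞ ↦ ⊤`), which is an order isomorphism onto `ℕ∞`,
so inequalities and equalities of degrees are faithfully represented.
`xdegLE d T` means "`xdeg T ≤ d - 1`" (i.e. the predicate at level `d : ℕ`).
-/

open CategoryTheory CategoryTheory.Limits

universe v u w z

variable {C : Type u} [Category.{v} C] {A : Type w} [Category.{z} A] [Abelian A]

/-- The natural transformation `T ∗ ι : T ⟶ s ⋙ T` induced by `ι : 𝟭 C ⟶ s`. -/
def stabMap (s : C ⥤ C) (ι : 𝟭 C ⟶ s) (T : C ⥤ A) : T ⟶ s ⋙ T :=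
  T.leftUnitor.inv ≫ Functor.whiskerRight ι T

/-- `degLE s ι d T` means `deg T ≤ d - 1`:  `deg T ≤ -1` iff `T = 0`, and
`deg T ≤ d` iff `T = 0` or all the cokernels of `T ∗ ιᵢ` have degree `≤ d - 1`. -/
def degLE {I : Type*} (s : I → C ⥤ C) (ι : ∀ i, 𝟭 C ⟶ s i) :
    ℕ → (C ⥤ A) → Prop
  | 0, T => IsZero T
  | d + 1, T => IsZero T ∨ ∀ i, degLE s ι d (cokernel (stabMap (s i) (ι i) T))

/-- `idegLE s ι d T` means `ideg T ≤ d - 1`: as for `deg`, but additionally requiring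
that each `T ∗ ιᵢ` has vanishing kernel. -/
def idegLE {I : Type*} (s : I → C ⥤ C) (ι : ∀ i, 𝟭 C ⟶ s i) :
    ℕ → (C ⥤ A) → Prop
  | 0, T => IsZero T
  | d + 1, T => IsZero T ∨ ∀ i,
      IsZero (kernel (stabMap (s i) (ι i) T)) ∧
      idegLE s ι d (cokernel (stabMap (s i) (ι i) T))

/-- `sdegLE s ι d T` means `sdeg T ≤ d - 1`: as for `deg`, but additionally requiring
that each `T ∗ ιᵢ` is a split monomorphism in the functor category. -/
def sdegLE {I : Type*} (s : I → C ⥤ C) (ι : ∀ i, 𝟭 C ⟶ s i) :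
    ℕ → (C ⥤ A) → Prop
  | 0, T => IsZero T
  | d + 1, T => IsZero T ∨ ∀ i,
      IsSplitMono (stabMap (s i) (ι i) T) ∧
      sdegLE s ι d (cokernel (stabMap (s i) (ι i) T))

/-- `κ(T) = T`, where `κ(T) = Σᵢ ker(T ∗ ιᵢ)` as a subobject of `T`: expressed as
"the only subobject of `T` containing all the kernel subobjects is `⊤`", which is
equivalent to the sum (= supremum) of the kernel subobjects being all of `T`. -/
def kappaEqTop {I : Type*} (s : I → C ⥤ C) (ι : ∀ i, 𝟭 C ⟶ s i) (T : C ⥤ A) : Prop :=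
  ∀ W : Subobject T, (∀ i, kernelSubobject (stabMap (s i) (ι i) T) ≤ W) → W = ⊤

/-- `wdegLE s ι d T` means `wdeg T ≤ d - 1`: `wdeg T ≤ -1` iff `κ(T) = T`, and
`wdeg T ≤ d` iff `κ(T) = T` or all the cokernels of `T ∗ ιᵢ` have weak degree `≤ d - 1`. -/
def wdegLE {I : Type*} (s : I → C ⥤ C) (ι : ∀ i, 𝟭 C ⟶ s i) :
    ℕ → (C ⥤ A) → Prop
  | 0, T => kappaEqTop s ι T
  | d + 1, T => kappaEqTop s ι T ∨ ∀ i, wdegLE s ι d (cokernel (stabMap (s i) (ι i) T))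

/-- The degree of `T` (shifted by one: the value `deg T + 1 ∈ ℕ∞`). -/
noncomputable def deg {I : Type*} (s : I → C ⥤ C) (ι : ∀ i, 𝟭 C ⟶ s i) (T : C ⥤ A) : ℕ∞ :=
  sInf {e : ℕ∞ | ∃ d : ℕ, e = (d : ℕ∞) ∧ degLE s ι d T}

/-- The injective degree of `T` (shifted by one). -/
noncomputable def ideg {I : Type*} (s : I → C ⥤ C) (ι : ∀ i, 𝟭 C ⟶ s i) (T : C ⥤ A) : ℕ∞ :=
  sInf {e : ℕ∞ | ∃ d : ℕ, e = (d : ℕ∞) ∧ idegLE s ι d T}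

/-- The split degree of `T` (shifted by one). -/
noncomputable def sdeg {I : Type*} (s : I → C ⥤ C) (ι : ∀ i, 𝟭 C ⟶ s i) (T : C ⥤ A) : ℕ∞ :=
  sInf {e : ℕ∞ | ∃ d : ℕ, e = (d : ℕ∞) ∧ sdegLE s ι d T}

/-- The weak degree of `T` (shifted by one). -/
noncomputable def wdeg {I : Type*} (s : I → C ⥤ C) (ι : ∀ i, 𝟭 C ⟶ s i) (T : C ⥤ A) : ℕ∞ :=
  sInf {e : ℕ∞ | ∃ d : ℕ, e = (d : ℕ∞) ∧ wdegLE s ι d T}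

/-!
A left inverse `πᵢ` of `ιᵢ` makes every `T ∗ ιᵢ` a split monomorphism, with retraction
`T ∗ πᵢ`. So the extra conditions in the definitions of `ideg` and `sdeg` hold automatically,
and since all the kernels of `T ∗ ιᵢ` vanish, `κ(T) = 0` and the condition `κ(T) = T` of `wdeg`
reduces to `T = 0`. The four recursive predicates therefore agree level by level.
-/

namespace CategoryTheory.Subobject

theorem bot_eq_top_iff_isZero {D : Type*} [Category D] [HasZeroObject D] [HasZeroMorphisms D]
    {X : D} : (⊥ : Subobject X) = ⊤ ↔ IsZero X := by
  rw [top_eq_id, eq_comm, mk_eq_bot_iff_zero, IsZero.iff_id_eq_zero]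

end CategoryTheory.Subobject

namespace CategoryTheory.Limits

theorem kernelSubobject_eq_bot_of_mono {D : Type*} [Category D] [HasZeroObject D]
    [HasZeroMorphisms D] {X Y : D} (f : X ⟶ Y) [HasKernel f] [Mono f] :
    kernelSubobject f = ⊥ :=
  Subobject.mk_eq_bot_iff_zero.2 (kernel.ι_of_mono f)

end CategoryTheory.Limits

omit [Abelian A] in
theorem stabMap_isSplitMono {s : C ⥤ C} {ι : 𝟭 C ⟶ s} {π : s ⟶ 𝟭 C} (hπ : ι ≫ π = 𝟙 (𝟭 C))
    (T : C ⥤ A) : IsSplitMono (stabMap s ι T) :=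
  IsSplitMono.mk' ⟨Functor.whiskerRight π T ≫ T.leftUnitor.hom, by
    simp [stabMap, ← Functor.whiskerRight_comp_assoc, hπ]⟩

section

variable {I : Type*} {s : I → C ⥤ C} {ι : ∀ i, 𝟭 C ⟶ s i}

theorem kappaEqTop_iff_isZero {T : C ⥤ A} (hmono : ∀ i, Mono (stabMap (s i) (ι i) T)) :
    kappaEqTop s ι T ↔ IsZero T := by
  rw [← Subobject.bot_eq_top_iff_isZero]
  refine ⟨fun h => h ⊥ fun i => (kernelSubobject_eq_bot_of_mono _).le, fun h W _ => ?_⟩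
  have := subsingleton_of_bot_eq_top h
  exact Subsingleton.elim W ⊤

theorem degLE_iff_idegLE (hmono : ∀ i (T : C ⥤ A), Mono (stabMap (s i) (ι i) T)) (d : ℕ)
    (T : C ⥤ A) : degLE s ι d T ↔ idegLE s ι d T := by
  induction d generalizing T with
  | zero => rfl
  | succ d ih => simp only [degLE, idegLE, ih, isZero_kernel_of_mono, true_and]

theorem degLE_iff_sdegLE (hsplit : ∀ i (T : C ⥤ A), IsSplitMono (stabMap (s i) (ι i) T))
    (d : ℕ) (T : C ⥤ A) : degLE s ι d T ↔ sdegLE s ι d T := by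
  induction d generalizing T with
  | zero => rfl
  | succ d ih => simp only [degLE, sdegLE, ih, hsplit, true_and]

theorem degLE_iff_wdegLE (hmono : ∀ i (T : C ⥤ A), Mono (stabMap (s i) (ι i) T)) (d : ℕ)
    (T : C ⥤ A) : degLE s ι d T ↔ wdegLE s ι d T := by
  induction d generalizing T with
  | zero => exact (kappaEqTop_iff_isZero (hmono · T)).symm
  | succ d ih => simp only [degLE, wdegLE, ih, kappaEqTop_iff_isZero (hmono · T)]

end

/-- If each stabilisation map `ιᵢ : 𝟭 C ⟶ sᵢ` admits a left inverse
`πᵢ : sᵢ ⟶ 𝟭 C` with `πᵢ ∘ ιᵢ = id`, then for every functor `T : C ⥤ A`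
all four degrees coincide: `wdeg T = deg T = ideg T = sdeg T`. -/
theorem all_degrees_eq_of_retraction {I : Type*} (s : I → C ⥤ C) (ι : ∀ i, 𝟭 C ⟶ s i)
    (π : ∀ i, s i ⟶ 𝟭 C) (hπ : ∀ i, ι i ≫ π i = 𝟙 (𝟭 C))
    (T : C ⥤ A) :
    wdeg s ι T = deg s ι T ∧ deg s ι T = ideg s ι T ∧ ideg s ι T = sdeg s ι T := by
  have hsplit i (T : C ⥤ A) : IsSplitMono (stabMap (s i) (ι i) T) := stabMap_isSplitMono (hπ i) T
  have hmono i (T : C ⥤ A) : Mono (stabMap (s i) (ι i) T) := inferInstance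
  refine ⟨?_, ?_, ?_⟩
  · simp only [wdeg, deg, degLE_iff_wdegLE hmono]
  · simp only [deg, ideg, degLE_iff_idegLE hmono]
  · simp only [ideg, sdeg, ← degLE_iff_idegLE hmono, degLE_iff_sdegLE hsplit]
end

section
/- Let A be an abelian category, n ≥ 0, and f : I_n → A a functor. Then the objects cr(f) and c̄r(f∘z) of A are isomorphic. -/
/-
Write `e = ∑_S (-1)^|S| f(n̲ ∖ S)`. For `T ≠ n̲` pick `a ∉ T`; toggling `a` in `S` pairs off the
terms of `f T ≫ e = ∑_S (-1)^|S| f(T ∖ S)` with opposite signs, so `f T ≫ e = 0`. Every term of `e`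
except `f n̲ = 𝟙` is some `f T` with `T ≠ n̲`, so any `g` killed by all such `f T` has `e ≫ g = g`.
Taking `g = e` shows `e` is idempotent, taking `g` the cokernel projection of `⊕_{T ≠ n̲} f T`
shows `e` acts as the identity on that cokernel, while `e` kills every `f T`; so the image of `e`
and the cokernel are mutually inverse retracts of `X`.
-/

open CategoryTheory CategoryTheory.Limits

universe v u

variable {A : Type u} [Category.{v} A] [Abelian A]

attribute [local instance] CategoryTheory.Abelian.hasFiniteBiproducts

namespace Finset

theorem sum_neg_one_pow_card_smul_sdiff_eq_zero {ι M : Type*} [Fintype ι] [DecidableEq ι]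
    [AddCommGroup M] (g : Finset ι → M) {T : Finset ι} (hT : T ≠ univ) :
    ∑ S : Finset ι, ((-1 : ℤ) ^ S.card) • g (T \ S) = 0 := by
  obtain ⟨a, haT⟩ : ∃ a, a ∉ T := by simpa [eq_univ_iff_forall] using hT
  have ha : a ∉ univ.erase a := notMem_erase a univ
  rw [← powerset_univ, ← insert_erase (mem_univ a), sum_powerset_insert ha, ← sum_add_distrib]
  refine sum_eq_zero fun S hS => ?_
  have haS : a ∉ S := fun h => ha (mem_powerset.1 hS h)
  rw [card_insert_of_notMem haS, sdiff_insert_of_notMem haT, pow_succ, mul_neg_one, neg_smul,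
    add_neg_cancel]

end Finset

section Idempotent

variable {C : Type*} [Category C]

theorem image.ι_comp_factorThruImage_of_idempotent {X : C} {e : X ⟶ X} [HasImage e]
    [Epi (factorThruImage e)] (he : e ≫ e = e) : image.ι e ≫ factorThruImage e = 𝟙 _ := by
  rw [← cancel_mono (image.ι e), Category.assoc, image.fac, Category.id_comp,
    ← cancel_epi (factorThruImage e), ← Category.assoc, image.fac, he]

noncomputable def imageIsoCokernelOfIdempotent [HasZeroMorphisms C] {X Y : C} {e : X ⟶ X}
    {d : Y ⟶ X} [HasImage e] [Epi (factorThruImage e)] [HasCokernel d] (he : e ≫ e = e)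
    (hde : d ≫ e = 0) (heπ : e ≫ cokernel.π d = cokernel.π d) : image e ≅ cokernel d where
  hom := image.ι e ≫ cokernel.π d
  inv := cokernel.desc d (factorThruImage e) (by
    rw [← cancel_mono (image.ι e), Category.assoc, image.fac, hde, zero_comp])
  hom_inv_id := by
    rw [Category.assoc, cokernel.π_desc, image.ι_comp_factorThruImage_of_idempotent he]
  inv_hom_id := by
    rw [← cancel_epi (cokernel.π d), ← Category.assoc, cokernel.π_desc, Category.comp_id,
      ← Category.assoc, image.fac, heπ]

end Idempotent

section CrossEffect

open Finset

variable {C : Type*} [Category C] [Preadditive C] {ι : Type*} [Fintype ι] [DecidableEq ι]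
  {X : C}

def crossEffectEndo (f : Finset ι → (X ⟶ X)) : X ⟶ X :=
  ∑ S : Finset ι, ((-1 : ℤ) ^ S.card) • f (univ \ S)

variable {f : Finset ι → (X ⟶ X)}

theorem comp_crossEffectEndo_eq_zero (hcomp : ∀ S T : Finset ι, f S ≫ f T = f (S ∩ T))
    {T : Finset ι} (hT : T ≠ univ) : f T ≫ crossEffectEndo f = 0 := by
  have hinter : ∀ S : Finset ι, T ∩ (univ \ S) = T \ S := fun S => by
    simp [sdiff_eq_inter_compl]
  simpa only [crossEffectEndo, Preadditive.comp_sum, Preadditive.comp_zsmul, hcomp, hinter]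
    using sum_neg_one_pow_card_smul_sdiff_eq_zero f hT

theorem crossEffectEndo_comp_of_forall_comp_eq_zero (hid : f univ = 𝟙 X) {Z : C} {g : X ⟶ Z}
    (hg : ∀ T ≠ univ, f T ≫ g = 0) : crossEffectEndo f ≫ g = g := by
  rw [crossEffectEndo, Preadditive.sum_comp, sum_eq_single (∅ : Finset ι)]
  · simp [hid]
  · intro S _ hS
    have hS' : univ \ S ≠ univ := by
      rwa [← compl_eq_univ_sdiff, compl_ne_univ_iff_nonempty, nonempty_iff_ne_empty]
    rw [Preadditive.zsmul_comp, hg _ hS', smul_zero]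
  · simp

theorem crossEffectEndo_idempotent (hcomp : ∀ S T : Finset ι, f S ≫ f T = f (S ∩ T))
    (hid : f univ = 𝟙 X) : crossEffectEndo f ≫ crossEffectEndo f = crossEffectEndo f :=
  crossEffectEndo_comp_of_forall_comp_eq_zero hid fun _ hT => comp_crossEffectEndo_eq_zero hcomp hT

end CrossEffect

/-- let `A` be an abelian category, `n ≥ 0`, and `f : I_n ⥤ A` a functor,
encoded as an object `X = f(•)` together with endomorphisms `f S` for `S ⊆ n̲` (here
`n̲ = Fin n`) satisfying `f S ≫ f T = f (S ∩ T)` and `f univ = 𝟙 X`.  Then the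
cross-effect `cr(f) = im( Σ_{S ⊆ n̲} (−1)^{|S|} f(n̲ ∖ S) )` is isomorphic to
`c̄r(f ∘ z) = coker( ⊕_{S ⊊ n̲} f S : ⊕_{S ⊊ n̲} X ⟶ X )`. -/
theorem cr_iso_crbar (n : ℕ) (X : A) (f : Finset (Fin n) → (X ⟶ X))
    (hcomp : ∀ S T : Finset (Fin n), f S ≫ f T = f (S ∩ T))
    (hid : f Finset.univ = 𝟙 X) :
    Nonempty
      (Limits.image (∑ S : Finset (Fin n), ((-1 : ℤ) ^ S.card) • f (Finset.univ \ S))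
        ≅ cokernel (biproduct.desc
            (f := fun _ : {S : Finset (Fin n) // S ≠ Finset.univ} => X)
            (fun S => f S.1))) := by
  set d := biproduct.desc (f := fun _ : {S : Finset (Fin n) // S ≠ Finset.univ} => X)
    (fun S => f S.1)
  have hfπ : ∀ T ≠ Finset.univ, f T ≫ cokernel.π d = 0 := fun T hT => by
    simpa only [Category.assoc, comp_zero, d, biproduct.ι_desc_assoc]
      using biproduct.ι _ ⟨T, hT⟩ ≫= cokernel.condition d
  have hde : d ≫ crossEffectEndo f = 0 := biproduct.hom_ext' _ _ fun T => by
    simpa only [d, biproduct.ι_desc_assoc, comp_zero]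
      using comp_crossEffectEndo_eq_zero hcomp T.2
  exact ⟨imageIsoCokernelOfIdempotent (crossEffectEndo_idempotent hcomp hid) hde
    (crossEffectEndo_comp_of_forall_comp_eq_zero hid hfπ)⟩
end

section
/- Let A be an abelian category, n ≥ 0, and f : I_n → A a functor. Let g = Σ_{S⊆n̲} (−1)^{|S|} f(n̲∖S), an endomorphism of f(•). Then ker(g) = Σ_{S⊊n̲} im(f(S)) as subobjects of f(•), where the sum on the right is over all proper subsets S of n̲. -/
open CategoryTheory CategoryTheory.Limits

universe v u

variable {A : Type u} [Category.{v} A] [Abelian A]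

/-- let `A` be an abelian category, `n ≥ 0`, and `f : I_n ⥤ A` a functor,
encoded as an object `X = f(•)` together with endomorphisms `f S` for `S ⊆ n̲`
(`n̲ = Fin n`) satisfying `f S ≫ f T = f (S ∩ T)` and `f univ = 𝟙 X`.  Let
`g = Σ_{S ⊆ n̲} (−1)^{|S|} f(n̲ ∖ S)`.  Then `ker g = Σ_{S ⊊ n̲} im (f S)` as subobjects
of `X`, the sum over proper subsets being the supremum in the subobject lattice. -/
theorem ker_eq_sum_im (n : ℕ) (X : A) (f : Finset (Fin n) → (X ⟶ X))
    (hcomp : ∀ S T : Finset (Fin n), f S ≫ f T = f (S ∩ T))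
    (hid : f Finset.univ = 𝟙 X) :
    kernelSubobject (∑ S : Finset (Fin n), ((-1 : ℤ) ^ S.card) • f (Finset.univ \ S))
      = ((Finset.univ : Finset (Finset (Fin n))).erase Finset.univ).sup
          (fun S => imageSubobject (f S)) := by
  classical
  set g : X ⟶ X := ∑ S : Finset (Fin n), ((-1 : ℤ) ^ S.card) • f (Finset.univ \ S) with hg
  -- key: for proper S, f S ≫ g = 0
  have key : ∀ S : Finset (Fin n), S ≠ Finset.univ → f S ≫ g = 0 := by
    intro S hS
    obtain ⟨i, hi⟩ : ∃ i, i ∉ S := by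
      by_contra h
      push_neg at h
      exact hS (Finset.eq_univ_iff_forall.2 h)
    have hterm : ∀ T : Finset (Fin n),
        f S ≫ ((-1 : ℤ) ^ T.card • f (Finset.univ \ T))
          = ((-1 : ℤ) ^ T.card) • f (S \ T) := by
      intro T
      rw [Preadditive.comp_zsmul, hcomp]
      congr 2
      ext x
      simp [Finset.mem_sdiff, Finset.mem_inter, and_comm]
    have : f S ≫ g = ∑ T : Finset (Fin n), ((-1 : ℤ) ^ T.card) • f (S \ T) := by
      show f S ≫ (∑ T : Finset (Fin n), ((-1 : ℤ) ^ T.card) • f (Finset.univ \ T)) = _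
      rw [Preadditive.comp_sum]
      exact Finset.sum_congr rfl fun T _ => hterm T
    rw [this]
    refine Finset.sum_ninvolution (fun T => if i ∈ T then T.erase i else insert i T)
      ?_ ?_ (fun _ => Finset.mem_univ _) ?_
    · intro T
      by_cases hiT : i ∈ T
      · have hsd : S \ T.erase i = S \ T := by
          ext x
          by_cases hx : x = i <;> simp [Finset.mem_sdiff, Finset.mem_erase, hx, hi]
        have hpos : 1 ≤ T.card := Finset.card_pos.2 ⟨i, hiT⟩
        have hsign : ((-1 : ℤ) ^ (T.card - 1)) = -((-1 : ℤ) ^ T.card) := by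
          have h1 : T.card - 1 + 1 = T.card := Nat.sub_add_cancel hpos
          have h2 := pow_succ (-1 : ℤ) (T.card - 1)
          rw [h1] at h2
          rw [h2]; ring
        simp only [if_pos hiT, hsd, Finset.card_erase_of_mem hiT, hsign, neg_smul]
        exact add_neg_cancel _
      · have hsd : S \ insert i T = S \ T := by
          ext x
          by_cases hx : x = i <;> simp [Finset.mem_sdiff, hx, hi]
        have hsign : ((-1 : ℤ) ^ (insert i T).card) = -((-1 : ℤ) ^ T.card) := by
          rw [Finset.card_insert_of_notMem hiT, pow_succ]
          ring
        simp only [if_neg hiT, hsd, hsign, neg_smul]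
        exact add_neg_cancel _
    · intro T hne
      show (if i ∈ T then T.erase i else insert i T) ≠ T
      by_cases hiT : i ∈ T
      · rw [if_pos hiT]
        intro h
        exact (h ▸ Finset.notMem_erase i T) hiT
      · rw [if_neg hiT]
        intro h
        exact hiT (h ▸ Finset.mem_insert_self i T)
    · intro T
      by_cases hiT : i ∈ T
      · simp [hiT, Finset.insert_erase hiT, Finset.notMem_erase]
      · simp [hiT, Finset.erase_insert hiT]
  refine le_antisymm ?_ ?_
  · -- ker ≤ sup
    set k := (kernelSubobject g).arrow with hk
    have hkg : k ≫ g = 0 := by simp [hk]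
    have h1 : k ≫ g = ∑ S : Finset (Fin n),
        ((-1 : ℤ) ^ S.card) • (k ≫ f (Finset.univ \ S)) := by
      show k ≫ (∑ S : Finset (Fin n), ((-1 : ℤ) ^ S.card) • f (Finset.univ \ S)) = _
      rw [Preadditive.comp_sum]
      exact Finset.sum_congr rfl fun S _ => by rw [Preadditive.comp_zsmul]
    have h2 : (0 : ((kernelSubobject g) : A) ⟶ X)
        = k + ∑ S ∈ (Finset.univ : Finset (Finset (Fin n))).erase ∅,
          ((-1 : ℤ) ^ S.card) • (k ≫ f (Finset.univ \ S)) := by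
      rw [← hkg, h1, ← Finset.add_sum_erase _ _ (Finset.mem_univ ∅)]
      simp [hid]
    have h3 : k = -∑ S ∈ (Finset.univ : Finset (Finset (Fin n))).erase ∅,
        ((-1 : ℤ) ^ S.card) • (k ≫ f (Finset.univ \ S)) :=
      eq_neg_of_add_eq_zero_left h2.symm
    have h4 : (-∑ S ∈ (Finset.univ : Finset (Finset (Fin n))).erase ∅,
          ((-1 : ℤ) ^ S.card) • (k ≫ f (Finset.univ \ S)))
        = ∑ S ∈ (Finset.univ : Finset (Finset (Fin n))).erase ∅,
          (-((-1 : ℤ) ^ S.card)) • (k ≫ f (Finset.univ \ S)) := by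
      rw [← Finset.sum_neg_distrib]
      exact Finset.sum_congr rfl fun S _ => (neg_smul _ _).symm
    have hsum := h3.trans h4
    have hfac : (((Finset.univ : Finset (Finset (Fin n))).erase Finset.univ).sup
        (fun S => imageSubobject (f S))).Factors k := by
      rw [hsum]
      refine Finset.sum_induction _ _ (fun a b ha hb => Subobject.factors_add _ _ ha hb)
        Subobject.factors_zero ?_
      intro S hSmem
      have hSne : S ≠ ∅ := (Finset.mem_erase.1 hSmem).1
      have hTne : Finset.univ \ S ≠ Finset.univ := by
        intro h
        have h2 := congrArg (fun U => Finset.univ \ U) h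
        simp at h2
        exact hSne h2
      have hle : imageSubobject (f (Finset.univ \ S))
          ≤ ((Finset.univ : Finset (Finset (Fin n))).erase Finset.univ).sup
            (fun S => imageSubobject (f S)) :=
        Finset.le_sup (f := fun S => imageSubobject (f S))
          (Finset.mem_erase.2 ⟨hTne, Finset.mem_univ _⟩)
      refine Subobject.factors_of_le _ hle ?_
      have heq : (-((-1 : ℤ) ^ S.card)) • (k ≫ f (Finset.univ \ S))
          = ((-((-1 : ℤ) ^ S.card)) • k) ≫ f (Finset.univ \ S) := by
        rw [Preadditive.zsmul_comp]
      rw [heq]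
      exact imageSubobject_factors_comp_self _ _
    exact Subobject.le_of_comm (Subobject.factorThru _ k hfac)
      (Subobject.factorThru_arrow _ _ hfac)
  · -- sup ≤ ker
    refine Finset.sup_le ?_
    intro S hS
    have hSne : S ≠ Finset.univ := (Finset.mem_erase.1 hS).1
    exact le_kernelSubobject _ _ (imageSubobject_arrow_comp_eq_zero (key S hSne))
end

section
/- Let A be an abelian category, n ≥ 0, and f : I_n → A a functor. Then there are isomorphisms c̄r(f∘z) ≅ cr(f) ≅ c̄r′(f∘z′) in A. In particular, coker(⊕_{S⊊n̲} f(S) : ⊕_{S⊊n̲} f(•) → f(•)) is isomorphic to ker(⊕_{S⊊n̲} f(S) : f(•) → ⊕_{S⊊n̲} f(•)). -/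
/-!
The endomorphism `e = ∑_S (-1)^|S| f(n̲ ∖ S)` is the key. For `S ≠ n̲` pick `x ∉ S`; adding `x`
to the summation index flips the sign and leaves `f S ∘ f(n̲ ∖ T) = f(S ∖ T)` unchanged, so
`f S ≫ e = 0 = e ≫ f S`. The terms of `e` other than `f n̲ = 𝟙` are multiples of the `f S` with
`S ≠ n̲`, so `𝟙 - e` is an integer combination of them; with `f S ≫ e = 0` this makes `e`
idempotent. Hence `⊕ f S` and `𝟙 - e` have the same cokernel and the same kernel, and for an
idempotent `e` both `coker (𝟙 - e)` and `ker (𝟙 - e)` are the image of `e`.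
-/

open CategoryTheory CategoryTheory.Limits

universe v u

variable {A : Type u} [Category.{v} A] [Abelian A]

attribute [local instance] CategoryTheory.Abelian.hasFiniteBiproducts

open Finset

namespace Finset

variable {α M : Type*} [Fintype α] [DecidableEq α] [AddCommGroup M]

theorem sum_eq_zero_of_insert_eq_neg (x : α) {φ : Finset α → M}
    (hφ : ∀ T, x ∉ T → φ (insert x T) = -φ T) : ∑ T, φ T = 0 := by
  have hx : x ∉ univ.erase x := notMem_erase x univ
  rw [← powerset_univ, ← insert_erase (mem_univ x), sum_powerset_insert hx, ← sum_add_distrib]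
  refine sum_eq_zero fun T hT => ?_
  rw [hφ T (notMem_mono (mem_powerset.1 hT) hx), add_neg_cancel]

theorem sum_neg_one_pow_card_smul_sdiff_eq_zero_s6 (φ : Finset α → M) {S : Finset α}
    (hS : S ≠ univ) : ∑ T, ((-1 : ℤ) ^ #T) • φ (S \ T) = 0 := by
  obtain ⟨x, hx⟩ : ∃ x, x ∉ S := by simpa [eq_univ_iff_forall] using hS
  refine sum_eq_zero_of_insert_eq_neg x fun T hxT => ?_
  rw [card_insert_of_notMem hxT, pow_succ, mul_neg_one, neg_smul, sdiff_insert_of_notMem hx]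

end Finset

section MutualAnnihilation

variable {C : Type*} [Category C] [HasZeroMorphisms C] {X Y Z : C}

noncomputable def cokernelIsoOfCompπEqZero (g : Y ⟶ X) (h : Z ⟶ X) [HasCokernel g]
    [HasCokernel h] (hg : g ≫ cokernel.π h = 0) (hh : h ≫ cokernel.π g = 0) :
    cokernel g ≅ cokernel h where
  hom := cokernel.desc g (cokernel.π h) hg
  inv := cokernel.desc h (cokernel.π g) hh

noncomputable def kernelIsoOfιCompEqZero (g : X ⟶ Y) (h : X ⟶ Z) [HasKernel g] [HasKernel h]
    (hg : kernel.ι g ≫ h = 0) (hh : kernel.ι h ≫ g = 0) : kernel g ≅ kernel h where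
  hom := kernel.lift h (kernel.ι g) hg
  inv := kernel.lift g (kernel.ι h) hh

end MutualAnnihilation

section Idempotent

variable {C : Type*} [Category C] [Preadditive C] {X : C} {e : X ⟶ X}

theorem kernel.ι_id_sub_comp_self [HasKernel (𝟙 X - e)] :
    kernel.ι (𝟙 X - e) ≫ e = kernel.ι (𝟙 X - e) := by
  have h := kernel.condition (𝟙 X - e)
  rwa [Preadditive.comp_sub, Category.comp_id, sub_eq_zero, eq_comm] at h

theorem cokernel.self_comp_π_id_sub [HasCokernel (𝟙 X - e)] :
    e ≫ cokernel.π (𝟙 X - e) = cokernel.π (𝟙 X - e) := by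
  have h := cokernel.condition (𝟙 X - e)
  rwa [Preadditive.sub_comp, Category.id_comp, sub_eq_zero, eq_comm] at h

theorem idem_of_sum_smul_eq_id_sub {ι : Type*} [Fintype ι] {g : ι → (X ⟶ X)} {c : ι → ℤ}
    (hge : ∀ i, g i ≫ e = 0) (hc : ∑ i, c i • g i = 𝟙 X - e) : e ≫ e = e := by
  have : (𝟙 X - e) ≫ e = 0 := by simp [← hc, Preadditive.sum_comp, hge]
  rwa [Preadditive.sub_comp, Category.id_comp, sub_eq_zero, eq_comm] at this

noncomputable def cokernelIsoKernelOfIdem (he : e ≫ e = e) [HasCokernel (𝟙 X - e)]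
    [HasKernel (𝟙 X - e)] : cokernel (𝟙 X - e) ≅ kernel (𝟙 X - e) where
  hom := cokernel.desc _ (kernel.lift _ e (by simp [Preadditive.comp_sub, he]))
    (by ext; simp [Preadditive.sub_comp, he])
  inv := kernel.ι _ ≫ cokernel.π _
  hom_inv_id := by ext; simp [cokernel.self_comp_π_id_sub]
  inv_hom_id := by ext; simp [kernel.ι_id_sub_comp_self]

noncomputable def imageIsoKernelOfIdem (he : e ≫ e = e) [HasImage e] [HasKernel (𝟙 X - e)] :
    image e ≅ kernel (𝟙 X - e) :=
  (Image.isImage e).isoExt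
    (F' := { I := kernel (𝟙 X - e), m := kernel.ι _
             e := kernel.lift _ e (by simp [Preadditive.comp_sub, he]) })
    { lift := fun F' => kernel.ι _ ≫ F'.e
      lift_fac := fun F' => by simp [kernel.ι_id_sub_comp_self] }

end Idempotent

section AnnihilatedFamily

variable {C : Type*} [Category C] [Abelian C] {X : C} {e : X ⟶ X} {ι : Type*} [Fintype ι]
  {g : ι → (X ⟶ X)} {c : ι → ℤ}

noncomputable def cokernelBiproductDescIsoImageOfIdem (he : e ≫ e = e)
    (hge : ∀ i, g i ≫ e = 0) (hc : ∑ i, c i • g i = 𝟙 X - e) :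
    cokernel (biproduct.desc g) ≅ image e :=
  have hdesc : biproduct.desc g ≫ cokernel.π (𝟙 X - e) = 0 := by
    ext i
    have hgi : g i = g i ≫ (𝟙 X - e) := by simp [Preadditive.comp_sub, hge]
    rw [biproduct.ι_desc_assoc, hgi, Category.assoc, cokernel.condition, comp_zero, comp_zero]
  have hsub : (𝟙 X - e) ≫ cokernel.π (biproduct.desc g) = 0 := by
    simp only [← hc, Preadditive.sum_comp, Preadditive.zsmul_comp]
    refine sum_eq_zero fun i _ => ?_
    rw [← biproduct.ι_desc g i, Category.assoc, cokernel.condition, comp_zero, smul_zero]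
  cokernelIsoOfCompπEqZero _ _ hdesc hsub ≪≫ cokernelIsoKernelOfIdem he ≪≫
    (imageIsoKernelOfIdem he).symm

noncomputable def imageIsoKernelBiproductLiftOfIdem (he : e ≫ e = e)
    (heg : ∀ i, e ≫ g i = 0) (hc : ∑ i, c i • g i = 𝟙 X - e) :
    image e ≅ kernel (biproduct.lift g) :=
  have hlift : kernel.ι (𝟙 X - e) ≫ biproduct.lift g = 0 := by
    ext i
    have hgi : g i = (𝟙 X - e) ≫ g i := by simp [Preadditive.sub_comp, heg]
    rw [Category.assoc, biproduct.lift_π, hgi, ← Category.assoc, kernel.condition, zero_comp,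
      zero_comp]
  have hsub : kernel.ι (biproduct.lift g) ≫ (𝟙 X - e) = 0 := by
    simp only [← hc, Preadditive.comp_sum, Preadditive.comp_zsmul]
    refine sum_eq_zero fun i _ => ?_
    rw [← biproduct.lift_π g i, ← Category.assoc, kernel.condition, zero_comp, smul_zero]
  imageIsoKernelOfIdem he ≪≫ kernelIsoOfιCompEqZero _ _ hlift hsub

end AnnihilatedFamily

section CrossEffect

variable {C : Type*} [Category C] [Preadditive C] {X : C} {α : Type*} [Fintype α] [DecidableEq α]
  (f : Finset α → (X ⟶ X))

noncomputable def crossEffectProjector : X ⟶ X :=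
  ∑ S, ((-1 : ℤ) ^ #S) • f (univ \ S)

variable {f}

theorem comp_crossEffectProjector (hcomp : ∀ S T, f S ≫ f T = f (S ∩ T)) {S : Finset α}
    (hS : S ≠ univ) : f S ≫ crossEffectProjector f = 0 := by
  simp only [crossEffectProjector, Preadditive.comp_sum, Preadditive.comp_zsmul, hcomp,
    inter_sdiff_left_comm S univ, univ_inter]
  exact sum_neg_one_pow_card_smul_sdiff_eq_zero_s6 f hS

theorem crossEffectProjector_comp (hcomp : ∀ S T, f S ≫ f T = f (S ∩ T)) {S : Finset α}
    (hS : S ≠ univ) : crossEffectProjector f ≫ f S = 0 := by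
  simp only [crossEffectProjector, Preadditive.sum_comp, Preadditive.zsmul_comp, hcomp,
    inter_comm _ S, inter_sdiff_left_comm S univ, univ_inter]
  exact sum_neg_one_pow_card_smul_sdiff_eq_zero_s6 f hS

theorem sum_smul_eq_id_sub_crossEffectProjector (hid : f univ = 𝟙 X) :
    ∑ S : {S : Finset α // S ≠ univ}, (-(-1 : ℤ) ^ #(univ \ S.1)) • f S.1 =
      𝟙 X - crossEffectProjector f := by
  have hcompl : crossEffectProjector f = ∑ S, ((-1 : ℤ) ^ #(univ \ S)) • f S := by
    have hinv (S : Finset α) : univ \ (univ \ S) = S := Finset.sdiff_sdiff_eq_self (subset_univ S)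
    exact Fintype.sum_bijective _ (Function.Involutive.bijective hinv) _ _ fun S => by rw [hinv]
  rw [hcompl, Fintype.sum_eq_add_sum_subtype_ne _ univ, Finset.sdiff_self, card_empty, pow_zero,
    one_smul, hid]
  simp only [neg_smul, sum_neg_distrib, sub_add_cancel_left]

end CrossEffect

/-- let `A` be an abelian category, `n ≥ 0`, and `f : I_n ⥤ A` a functor,
encoded as an object `X = f(•)` together with endomorphisms `f S` for `S ⊆ n̲`
(`n̲ = Fin n`) satisfying `f S ≫ f T = f (S ∩ T)` and `f univ = 𝟙 X`.  Then there are
isomorphisms `c̄r(f ∘ z) ≅ cr(f) ≅ c̄r′(f ∘ z′)`, i.e.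
`coker( ⊕_{S ⊊ n̲} f S : ⊕_{S ⊊ n̲} X ⟶ X ) ≅ im( Σ_{S ⊆ n̲} (−1)^{|S|} f(n̲ ∖ S) )`
and `cr(f) ≅ ker( ⊕_{S ⊊ n̲} f S : X ⟶ ⊕_{S ⊊ n̲} X )`; in particular the cokernel is
isomorphic to the kernel. -/
theorem crbar_iso_cr_iso_crbar' (n : ℕ) (X : A) (f : Finset (Fin n) → (X ⟶ X))
    (hcomp : ∀ S T : Finset (Fin n), f S ≫ f T = f (S ∩ T))
    (hid : f Finset.univ = 𝟙 X) :
    Nonempty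
      (cokernel (biproduct.desc
          (f := fun _ : {S : Finset (Fin n) // S ≠ Finset.univ} => X) (fun S => f S.1))
        ≅ Limits.image (∑ S : Finset (Fin n), ((-1 : ℤ) ^ S.card) • f (Finset.univ \ S)))
    ∧ Nonempty
      (Limits.image (∑ S : Finset (Fin n), ((-1 : ℤ) ^ S.card) • f (Finset.univ \ S))
        ≅ kernel (biproduct.lift
            (f := fun _ : {S : Finset (Fin n) // S ≠ Finset.univ} => X) (fun S => f S.1)))
    ∧ Nonempty
      (cokernel (biproduct.desc
          (f := fun _ : {S : Finset (Fin n) // S ≠ Finset.univ} => X) (fun S => f S.1))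
        ≅ kernel (biproduct.lift
            (f := fun _ : {S : Finset (Fin n) // S ≠ Finset.univ} => X) (fun S => f S.1))) := by
  have hge (S : {S : Finset (Fin n) // S ≠ univ}) : f S.1 ≫ crossEffectProjector f = 0 :=
    comp_crossEffectProjector hcomp S.2
  have heg (S : {S : Finset (Fin n) // S ≠ univ}) : crossEffectProjector f ≫ f S.1 = 0 :=
    crossEffectProjector_comp hcomp S.2
  have hc := sum_smul_eq_id_sub_crossEffectProjector hid
  have he := idem_of_sum_smul_eq_id_sub hge hc
  let cokerIsoImage := cokernelBiproductDescIsoImageOfIdem he hge hc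
  let imageIsoKer := imageIsoKernelBiproductLiftOfIdem he heg hc
  exact ⟨⟨cokerIsoImage⟩, ⟨imageIsoKer⟩, ⟨cokerIsoImage ≪≫ imageIsoKer⟩⟩
end

section
/- Let C be a category equipped with a functor s : I → C, let A be an abelian category, and let T : C → A be a functor. Then for all m ≥ n ≥ 0 the following two subobjects of Ts(m) are equal: im( Σ_{S⊆{m−n+1,…,m}} (−1)^{|S|} Ts(f_{S∪{1,…,m−n}}) ) = im(Ts(f_{{1,…,m−n}})) ∩ ⋂_{i=m−n+1}^{m} ker(Ts(f_{{i}})). -/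
open CategoryTheory CategoryTheory.Limits

/-- The category `𝓘`: objects are the non-negative integers, and a morphism `m ⟶ n`
is a subset of `{0, …, min m n − 1}` (the 0-based incarnation of `{1, …, min(m,n)}`),
thought of as the partial identity defined on that subset.  Composition is given by
intersection, and the identity of `n` is the full subset. -/
abbrev Icat : Type := ℕ

instance : Category Icat where
  Hom m n := {S : Finset ℕ // S ⊆ Finset.range (min m n)}
  id n := ⟨Finset.range n, by simp⟩
  comp {m n k} f g := ⟨f.1 ∩ g.1, by
    intro i hi
    rw [Finset.mem_inter] at hi
    have h1 := f.2 hi.1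
    have h2 := g.2 hi.2
    rw [Finset.mem_range] at h1 h2 ⊢
    omega⟩
  id_comp {m n} f := by
    apply Subtype.ext
    dsimp
    rw [Finset.inter_eq_right]
    intro i hi
    have := f.2 hi
    rw [Finset.mem_range] at this ⊢
    omega
  comp_id {m n} f := by
    apply Subtype.ext
    dsimp
    rw [Finset.inter_eq_left]
    intro i hi
    have := f.2 hi
    rw [Finset.mem_range] at this ⊢
    omega
  assoc f g h := by
    apply Subtype.ext
    exact Finset.inter_assoc _ _ _

/-- The endomorphism of `m` in `𝓘` given by the partial identity defined on the
subset `R` (intersected with the ambient set `{0, …, m−1}`). -/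
def pId (m : ℕ) (R : Finset ℕ) : (m : Icat) ⟶ (m : Icat) :=
  ⟨R ∩ Finset.range m, by
    intro i hi
    rw [Finset.mem_inter] at hi
    simpa [Nat.min_self] using hi.2⟩

universe v u w z

variable {C : Type u} [Category.{v} C] {A : Type w} [Category.{z} A] [Abelian A]

/-- The endomorphism `f_T` of `m` in `𝓘` that "forgets" the subset `T ⊆ m̲`, i.e. the
partial identity defined on `m̲ ∖ T` (0-based). -/
def fEnd (m : ℕ) (T : Finset ℕ) : (m : Icat) ⟶ (m : Icat) :=
  pId m (Finset.range m \ T)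

lemma fEnd_comp (m : ℕ) (U V : Finset ℕ) :
    fEnd m U ≫ fEnd m V = fEnd m (U ∪ V) := by
  apply Subtype.ext
  show ((Finset.range m \ U) ∩ Finset.range m) ∩ ((Finset.range m \ V) ∩ Finset.range m)
      = (Finset.range m \ (U ∪ V)) ∩ Finset.range m
  ext i
  simp only [Finset.mem_inter, Finset.mem_sdiff, Finset.mem_union]
  tauto

lemma key_lemma {X : A} (E : Finset ℕ → (X ⟶ X))
    (hE : ∀ U V, E U ≫ E V = E (U ∪ V)) (P R : Finset ℕ) :
    imageSubobject (∑ S ∈ P.powerset, ((-1 : ℤ) ^ S.card) • E (S ∪ R))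
      = imageSubobject (E R) ⊓ P.inf (fun i => kernelSubobject (E {i})) := by
  set f := ∑ S ∈ P.powerset, ((-1 : ℤ) ^ S.card) • E (S ∪ R) with hf
  have hER : E R ≫ E R = E R := by rw [hE, Finset.union_self]
  apply le_antisymm
  · apply le_inf
    · have hfac : f = (∑ S ∈ P.powerset, ((-1 : ℤ) ^ S.card) • E S) ≫ E R := by
        rw [hf, Preadditive.sum_comp]
        refine Finset.sum_congr rfl fun S _ => ?_
        rw [Preadditive.zsmul_comp, hE]
      rw [hfac]
      exact imageSubobject_comp_le _ (E R)
    · refine Finset.le_inf fun i hi => ?_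
      have hfi : f ≫ E {i} = 0 := by
        rw [hf, Preadditive.sum_comp]
        have step : ∀ S : Finset ℕ,
            (((-1 : ℤ) ^ S.card) • E (S ∪ R)) ≫ E {i}
              = ((-1 : ℤ) ^ S.card) • E (S ∪ R ∪ {i}) := fun S => by
          rw [Preadditive.zsmul_comp, hE]
        simp only [step]
        have hP : P = insert i (P.erase i) := (Finset.insert_erase hi).symm
        rw [hP, Finset.sum_powerset_insert (Finset.notMem_erase i P),
          ← Finset.sum_add_distrib]
        apply Finset.sum_eq_zero
        intro S hS
        have hiS : i ∉ S := fun h => Finset.notMem_erase i P (Finset.mem_powerset.mp hS h)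
        have hsets : insert i S ∪ R ∪ {i} = S ∪ R ∪ {i} := by
          ext j
          simp only [Finset.mem_union, Finset.mem_insert, Finset.mem_singleton]
          tauto
        rw [hsets, Finset.card_insert_of_notMem hiS, pow_succ, mul_neg_one, neg_smul,
          add_neg_cancel]
      exact imageSubobject_le _ (factorThruKernelSubobject _ f hfi) (by simp)
  · set Q := imageSubobject (E R) ⊓ P.inf (fun i => kernelSubobject (E {i})) with hQ
    have harr : (imageSubobject (E R)).arrow ≫ E R = (imageSubobject (E R)).arrow := by
      rw [← cancel_epi (factorThruImageSubobject (E R)), ← Category.assoc,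
        imageSubobject_arrow_comp, hER]
    have hQR : Q.arrow ≫ E R = Q.arrow := by
      have h1 : Q ≤ imageSubobject (E R) := inf_le_left
      rw [← Subobject.ofLE_arrow h1, Category.assoc, harr]
    have hQi : ∀ i ∈ P, Q.arrow ≫ E {i} = 0 := by
      intro i hi
      have h1 : Q ≤ kernelSubobject (E {i}) := inf_le_right.trans (Finset.inf_le hi)
      rw [← Subobject.ofLE_arrow h1, Category.assoc, kernelSubobject_arrow_comp, comp_zero]
    have hQf : Q.arrow ≫ f = Q.arrow := by
      rw [hf, Preadditive.comp_sum, Finset.sum_eq_single ∅]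
      · simp only [Finset.card_empty, pow_zero, one_smul, Finset.empty_union,
          Preadditive.comp_zsmul]
        simpa using hQR
      · intro S hS hSne
        obtain ⟨i, hiS⟩ := Finset.nonempty_iff_ne_empty.mpr hSne
        have hiP : i ∈ P := Finset.mem_powerset.mp hS hiS
        have habs : E (S ∪ R) = E {i} ≫ E (S ∪ R) := by
          rw [hE, Finset.union_eq_right.mpr
            (Finset.singleton_subset_iff.mpr (Finset.mem_union_left _ hiS))]
        rw [Preadditive.comp_zsmul, habs, ← Category.assoc, hQi i hiP, zero_comp, smul_zero]
      · intro h
        exact absurd (Finset.empty_mem_powerset P) h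
    refine Subobject.le_of_comm (Q.arrow ≫ factorThruImageSubobject f) ?_
    rw [Category.assoc, imageSubobject_arrow_comp, hQf]

/-- let `C` be a category equipped with a functor `s : 𝓘 ⥤ C`, `A` an
abelian category and `T : C ⥤ A` a functor.  Then for all `m ≥ n ≥ 0` the following two
subobjects of `T(s(m))` agree:
`im( Σ_{S ⊆ {m−n+1,…,m}} (−1)^{|S|} T s(f_{S ∪ {1,…,m−n}}) )`
  `= im(T s(f_{{1,…,m−n}})) ⊓ ⨅_{i=m−n+1}^{m} ker(T s(f_{{i}}))`.
(In 0-based coordinates `{m−n+1, …, m}` becomes `Finset.Ico (m−n) m` and `{1, …, m−n}`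
becomes `Finset.range (m−n)`.) -/
theorem image_alternating_sum_eq_inf_ker
    (s : Icat ⥤ C) (T : C ⥤ A) (m n : ℕ) (hnm : n ≤ m) :
    imageSubobject
        (∑ S ∈ (Finset.Ico (m - n) m).powerset,
          ((-1 : ℤ) ^ S.card) •
            T.map (s.map (fEnd m (S ∪ Finset.range (m - n)))))
      = imageSubobject (T.map (s.map (fEnd m (Finset.range (m - n)))))
          ⊓ (Finset.Ico (m - n) m).inf
              (fun i => kernelSubobject (T.map (s.map (fEnd m {i})))) := by
  exact key_lemma (fun U => T.map (s.map (fEnd m U)))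
    (fun U V => by rw [← T.map_comp, ← s.map_comp, fEnd_comp]) _ _
end

section
/- Let C be a category equipped with a functor s : I → C, let A be an abelian category, let T : C → A be a functor, and let λ ⊢ m be an ordered shifted partition of length n. Then the following two subobjects of Ts(m) are equal: im( Σ_{S⊆n̲} (−1)^{|S|} Ts(f_{{1,…,λ_0}∪S_λ}) ) = im(Ts(f_{{1,…,λ_0}})) ∩ ⋂_{i=1}^{n} ker(Ts(f_{{i}_λ})). -/
open CategoryTheory CategoryTheory.Limits

universe v u w z

variable {C : Type u} [Category.{v} C] {A : Type w} [Category.{z} A] [Abelian A]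

section Aux

/-- Composition of partial identities is the partial identity on the intersection. -/
lemma pId_comp (m : ℕ) (A B : Finset ℕ) : pId m A ≫ pId m B = pId m (A ∩ B) := by
  apply Subtype.ext
  show (A ∩ Finset.range m) ∩ (B ∩ Finset.range m) = (A ∩ B) ∩ Finset.range m
  ext x; simp only [Finset.mem_inter]; tauto

lemma zsmul_sign {X Y : A} (c : ℕ) (x : X ⟶ Y) :
    ((-1 : ℤ) ^ (c + 1)) • x = -(((-1 : ℤ) ^ c) • x) := by
  rw [pow_succ, mul_smul, neg_one_zsmul, smul_neg]

/-- Abstract form of the theorem, for any "intersection-multiplicative" family of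
endomorphisms `e : Finset ℕ → End X` in an abelian category. -/
lemma main_abstract {X : A} (e : Finset ℕ → (X ⟶ X))
    (hcomp : ∀ A₁ A₂, e A₁ ≫ e A₂ = e (A₁ ∩ A₂))
    (U V : Finset ℕ) (blk : ℕ → Finset ℕ) (t : Finset ℕ) :
    imageSubobject (∑ S ∈ t.powerset, ((-1 : ℤ) ^ S.card) • e (U \ (V ∪ S.biUnion blk)))
      = imageSubobject (e (U \ V))
          ⊓ t.inf (fun i => kernelSubobject (e (U \ blk i))) := by
  classical
  set P : X ⟶ X := ∑ S ∈ t.powerset, ((-1 : ℤ) ^ S.card) • e (U \ (V ∪ S.biUnion blk))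
    with hPdef
  have hgg : e (U \ V) ≫ e (U \ V) = e (U \ V) := by rw [hcomp, Finset.inter_self]
  have hPg : P ≫ e (U \ V) = P := by
    rw [hPdef, Preadditive.sum_comp]
    refine Finset.sum_congr rfl fun S _ => ?_
    rw [Preadditive.zsmul_comp, hcomp]
    congr 2
    ext x
    simp only [Finset.mem_inter, Finset.mem_sdiff, Finset.mem_union]
    tauto
  have hPk : ∀ i ∈ t, P ≫ e (U \ blk i) = 0 := by
    intro i hi
    rw [hPdef, Preadditive.sum_comp]
    have hpair : ∀ S : Finset ℕ, i ∉ S →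
        ((((-1 : ℤ) ^ S.card) • e (U \ (V ∪ S.biUnion blk))) ≫ e (U \ blk i))
          + ((((-1 : ℤ) ^ (insert i S).card) • e (U \ (V ∪ (insert i S).biUnion blk)))
              ≫ e (U \ blk i)) = 0 := by
      intro S hiS
      have hset : (U \ (V ∪ (insert i S).biUnion blk)) ∩ (U \ blk i)
          = (U \ (V ∪ S.biUnion blk)) ∩ (U \ blk i) := by
        ext x
        simp only [Finset.mem_inter, Finset.mem_sdiff, Finset.mem_union,
          Finset.biUnion_insert]
        tauto
      rw [Finset.card_insert_of_notMem hiS, Preadditive.zsmul_comp, Preadditive.zsmul_comp,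
        hcomp, hcomp, hset, zsmul_sign, add_neg_cancel]
    refine Finset.sum_involution (fun S _ => if i ∈ S then S.erase i else insert i S)
      ?_ ?_ ?_ ?_
    · intro S hS
      by_cases h : i ∈ S
      · simp only [if_pos h]
        have h2 := hpair (S.erase i) (Finset.notMem_erase i S)
        rw [Finset.insert_erase h] at h2
        rw [add_comm]
        exact h2
      · simp only [if_neg h]
        exact hpair S h
    · intro S hS _
      by_cases h : i ∈ S
      · simp only [if_pos h]
        intro hEq
        have h3 := Finset.notMem_erase i S
        rw [hEq] at h3
        exact h3 h
      · simp only [if_neg h]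
        intro hEq
        have h3 := Finset.mem_insert_self i S
        rw [hEq] at h3
        exact h h3
    · intro S hS
      rw [Finset.mem_powerset] at hS
      by_cases h : i ∈ S
      · simp only [if_pos h]
        exact Finset.mem_powerset.mpr ((Finset.erase_subset i S).trans hS)
      · simp only [if_neg h]
        exact Finset.mem_powerset.mpr (Finset.insert_subset hi hS)
    · intro S hS
      by_cases h : i ∈ S
      · simp only [if_pos h, if_neg (Finset.notMem_erase i S), Finset.insert_erase h]
      · simp only [if_neg h, if_pos (Finset.mem_insert_self i S), Finset.erase_insert h]
  apply le_antisymm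
  · refine le_inf ?_ (Finset.le_inf fun i hi => ?_)
    · have h1 : P = P ≫ e (U \ V) := hPg.symm
      rw [h1]
      exact imageSubobject_comp_le _ _
    · exact le_kernelSubobject _ _ (imageSubobject_arrow_comp_eq_zero (hPk i hi))
  · set Z := imageSubobject (e (U \ V)) ⊓ t.inf (fun i => kernelSubobject (e (U \ blk i)))
      with hZ
    have hag : Z.arrow ≫ e (U \ V) = Z.arrow := by
      have h1 : Z ≤ imageSubobject (e (U \ V)) := inf_le_left
      have h2 : (imageSubobject (e (U \ V))).arrow ≫ e (U \ V)
          = (imageSubobject (e (U \ V))).arrow := by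
        rw [← cancel_epi (factorThruImageSubobject (e (U \ V))),
          imageSubobject_arrow_comp_assoc, imageSubobject_arrow_comp]
        exact hgg
      rw [← Subobject.ofLE_arrow h1, Category.assoc, h2]
    have hak : ∀ i ∈ t, Z.arrow ≫ e (U \ blk i) = 0 := by
      intro i hi
      have h2 : Z ≤ kernelSubobject (e (U \ blk i)) :=
        le_trans inf_le_right (Finset.inf_le hi)
      rw [← Subobject.ofLE_arrow h2, Category.assoc, kernelSubobject_arrow_comp, comp_zero]
    have haP : Z.arrow ≫ P = Z.arrow := by
      rw [hPdef, Preadditive.comp_sum]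
      rw [Finset.sum_eq_single_of_mem ∅ (Finset.empty_mem_powerset t)]
      · simp only [Finset.card_empty, pow_zero, one_smul, Finset.biUnion_empty,
          Finset.union_empty]
        exact hag
      · intro S hS hSne
        obtain ⟨i, hiS⟩ := Finset.nonempty_iff_ne_empty.mpr hSne
        have hiT : i ∈ t := Finset.mem_powerset.mp hS hiS
        have hsetabs : (U \ blk i) ∩ (U \ (V ∪ S.biUnion blk))
            = U \ (V ∪ S.biUnion blk) := by
          ext x
          have hx : x ∈ blk i → x ∈ S.biUnion blk :=
            fun hx => Finset.mem_biUnion.mpr ⟨i, hiS, hx⟩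
          simp only [Finset.mem_inter, Finset.mem_sdiff, Finset.mem_union]
          tauto
        have habs : e (U \ (V ∪ S.biUnion blk))
            = e (U \ blk i) ≫ e (U \ (V ∪ S.biUnion blk)) := by
          rw [hcomp, hsetabs]
        rw [Preadditive.comp_zsmul, habs, ← Category.assoc, hak i hiT, zero_comp, smul_zero]
    refine Subobject.le_of_comm (Z.arrow ≫ factorThruImageSubobject P) ?_
    rw [Category.assoc, imageSubobject_arrow_comp, haP]

end Aux

/-- The `i`-th block `{i}_λ` of an ordered shifted partition `λ = (lam 0, …, lam n)`,
in 0-based coordinates: `{λ_0 + ⋯ + λ_{i−1}, …, λ_0 + ⋯ + λ_i − 1}`. -/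
def blkOf (lam : ℕ → ℕ) (i : ℕ) : Finset ℕ :=
  Finset.Ico (∑ j ∈ Finset.range i, lam j) (∑ j ∈ Finset.range (i + 1), lam j)

/-- let `C` be a category equipped with a functor `s : 𝓘 ⥤ C`, `A` an
abelian category, `T : C ⥤ A` a functor, and `λ ⊢ m` an ordered shifted partition of
length `n` (encoded as `lam : ℕ → ℕ` with `Σ_{i ≤ n} lam i = m`; only `lam 0, …, lam n`
matter).  Then the following two subobjects of `T(s(m))` agree:
`im( Σ_{S ⊆ n̲} (−1)^{|S|} T s(f_{{1,…,λ_0} ∪ S_λ}) )`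
  `= im(T s(f_{{1,…,λ_0}})) ⊓ ⨅_{i=1}^{n} ker(T s(f_{{i}_λ}))`.
(In 0-based coordinates `{1, …, λ_0}` becomes `Finset.range (lam 0)`, the index set `n̲`
of blocks is `Finset.Icc 1 n`, and `S_λ = ∪_{i ∈ S} {i}_λ` is `S.biUnion (blkOf lam)`.) -/
theorem image_alternating_sum_eq_inf_ker_partition
    (s : Icat ⥤ C) (T : C ⥤ A) (m n : ℕ) (lam : ℕ → ℕ)
    (hsum : ∑ i ∈ Finset.range (n + 1), lam i = m) :
    imageSubobject
        (∑ S ∈ (Finset.Icc 1 n).powerset,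
          ((-1 : ℤ) ^ S.card) •
            T.map (s.map (fEnd m (Finset.range (lam 0) ∪ S.biUnion (blkOf lam)))))
      = imageSubobject (T.map (s.map (fEnd m (Finset.range (lam 0)))))
          ⊓ (Finset.Icc 1 n).inf
              (fun i => kernelSubobject (T.map (s.map (fEnd m (blkOf lam i))))) :=
  main_abstract (fun A => T.map (s.map (pId m A)))
    (fun A₁ A₂ => by rw [← Functor.map_comp, ← Functor.map_comp, pId_comp])
    (Finset.range m) (Finset.range (lam 0)) (blkOf lam) (Finset.Icc 1 n)
end

section
/- Let C be a category equipped with a functor s : I → C, let A be an abelian category, and let T : C → A be a functor. Define h̄t_I(T) ∈ {−1,0,1,…,∞} by: h̄t_I(T) ≤ h iff for all m ≥ n > h the subobjects im(Ts(r_{S+m−n})) of Ts(m), as S ranges over the proper subsets of n̲ and S+m−n = {s+m−n : s ∈ S} ⊆ m̲ is regarded as an endomorphism of m in I, sum to all of Ts(m). Then h̄t_I(T) > 0 implies h̄t_I(T) = ∞; equivalently, if h̄t_I(T) < ∞ then h̄t_I(T) ≤ 0. -/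
open CategoryTheory CategoryTheory.Limits

universe v u w z

variable {C : Type u} [Category.{v} C] {A : Type w} [Category.{z} A] [Abelian A]

/-- The condition (for given `m ≥ n`) that the subobjects `im(T s(r_{S + m − n}))` of
`T(s(m))`, as `S` ranges over the proper subsets of `n̲` and `S + m − n` denotes the
shifted subset `{s + m − n : s ∈ S} ⊆ m̲` regarded as a partial-identity endomorphism of
`m` in `𝓘`, sum (i.e. have supremum) equal to all of `T(s(m))`. -/
def ImSumTop (s : Icat ⥤ C) (T : C ⥤ A) (m n : ℕ) : Prop :=
  ((Finset.range n).powerset.erase (Finset.range n)).sup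
      (fun S => imageSubobject (T.map (s.map (pId m (S.image (· + (m - n)))))))
    = ⊤

/-!
Take `M = m + h + 1` and `N = h + 1`. Every shifted subset `S + m` avoids `{0, …, m − 1}`, so
each generator `r_{S+m}` of `T s(M)`, followed by the retraction `s(M) → s(m)`, equals that
retraction followed by `r_∅`. As the images of the generators sum to `T s(M)` and the retraction
becomes a split epimorphism under `T ∘ s`, the image of `T s(r_∅)` is all of `T s(m)`. For
`n ≥ 1` the empty set is a proper subset of `n̲`, so `r_∅` is one of the generators of every
`ImSumTop s T m n`.
-/

lemma eq_zero_of_sup_imageSubobject_eq_top {ι : Type*} {X Y : A} {Z : ι → A} (K : Finset ι)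
    (g : ∀ k, Z k ⟶ X) (hsup : K.sup (fun k => imageSubobject (g k)) = ⊤) (φ : X ⟶ Y)
    (hz : ∀ k ∈ K, g k ≫ φ = 0) : φ = 0 := by
  have hker : kernelSubobject φ = ⊤ := by
    rw [eq_top_iff, ← hsup]
    exact Finset.sup_le fun k hk => imageSubobject_le (g k)
      (factorThruKernelSubobject φ (g k) (hz k hk)) (factorThruKernelSubobject_comp_arrow _ _ _)
  have : IsIso (kernelSubobject φ).arrow := (Subobject.isIso_arrow_iff_eq_top _).mpr hker
  rw [← cancel_epi (kernelSubobject φ).arrow, kernelSubobject_arrow_comp, comp_zero]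

lemma eq_top_of_sup_imageSubobject_eq_top {ι : Type*} {X Y : A} {Z : ι → A}
    (K : Finset ι) (g : ∀ k, Z k ⟶ X) (hsup : K.sup (fun k => imageSubobject (g k)) = ⊤)
    (p : X ⟶ Y) [Epi p] (W : Subobject Y) (hW : ∀ k ∈ K, W.Factors (g k ≫ p)) : W = ⊤ := by
  have hπ : p ≫ cokernel.π W.arrow = 0 :=
    eq_zero_of_sup_imageSubobject_eq_top K g hsup _ fun k hk => by
      rw [← Category.assoc, ← W.factorThru_arrow _ (hW k hk), Category.assoc, cokernel.condition,
        comp_zero]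
  have : Epi W.arrow :=
    Preadditive.epi_of_cokernel_zero (by rwa [← cancel_epi p, comp_zero])
  have : IsIso W.arrow := isIso_of_mono_of_epi _
  exact Subobject.eq_top_of_isIso_arrow W

namespace Icat

def fullHom (a b : Icat) : a ⟶ b := ⟨Finset.range (min a b), Finset.Subset.refl _⟩

lemma fullHom_comp_fullHom_of_le {m M : ℕ} (h : m ≤ M) :
    fullHom m M ≫ fullHom M m = 𝟙 (m : Icat) := by
  apply Subtype.ext
  change Finset.range (min m M) ∩ Finset.range (min M m) = Finset.range m
  rw [min_eq_left h, min_eq_right h, Finset.inter_self]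

lemma pId_comp_fullHom_of_disjoint {M m : ℕ} {R : Finset ℕ} (hR : Disjoint R (Finset.range m)) :
    pId M R ≫ fullHom M m = fullHom M m ≫ pId m ∅ := by
  apply Subtype.ext
  change (R ∩ Finset.range M) ∩ Finset.range (min M m) = Finset.range (min M m) ∩ (∅ ∩ _)
  rw [Finset.empty_inter, Finset.inter_empty, ← Finset.subset_empty]
  intro x hx
  simp only [Finset.mem_inter, Finset.mem_range, lt_min_iff] at hx
  exact (Finset.disjoint_left.mp hR hx.1.1 (Finset.mem_range.mpr hx.2.2)).elim

end Icat

open Icat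

lemma imageSubobject_pId_empty_eq_top (s : Icat ⥤ C) (T : C ⥤ A) {m M N : ℕ}
    (hmN : m ≤ M - N) (hMN : ImSumTop s T M N) :
    imageSubobject (T.map (s.map (pId m ∅))) = ⊤ := by
  have : IsSplitEpi (fullHom M m) :=
    IsSplitEpi.mk' ⟨fullHom m M, fullHom_comp_fullHom_of_le (by omega)⟩
  refine eq_top_of_sup_imageSubobject_eq_top _ _ hMN
    (T.map (s.map (fullHom M m))) _ fun S _ => ?_
  have hdisj : Disjoint (S.image (· + (M - N))) (Finset.range m) := by
    simp only [Finset.disjoint_left, Finset.mem_image, Finset.mem_range]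
    rintro _ ⟨a, -, rfl⟩
    omega
  rw [← T.map_comp, ← s.map_comp, pId_comp_fullHom_of_disjoint hdisj, s.map_comp, T.map_comp]
  exact imageSubobject_factors_comp_self _ _

/-- Statement 11: let `C` be a category with a functor `s : 𝓘 ⥤ C`, `A` an abelian
category and `T : C ⥤ A` a functor.  Define `h̄t_𝓘(T) ≤ h` iff `ImSumTop s T m n` holds
for all `m ≥ n > h`.  Then `h̄t_𝓘(T) > 0` implies `h̄t_𝓘(T) = ∞`; equivalently, if
`h̄t_𝓘(T) < ∞` (i.e. `h̄t_𝓘(T) ≤ h` for some `h ∈ ℕ`) then `h̄t_𝓘(T) ≤ 0`. -/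
theorem htbar_le_zero_of_finite (s : Icat ⥤ C) (T : C ⥤ A)
    (hfin : ∃ h : ℕ, ∀ m n : ℕ, n ≤ m → h < n → ImSumTop s T m n) :
    ∀ m n : ℕ, n ≤ m → 0 < n → ImSumTop s T m n := by
  obtain ⟨h, hfin⟩ := hfin
  intro m n _ hn
  have hempty := imageSubobject_pId_empty_eq_top s T (m := m) (N := h + 1) (by omega)
    (hfin (m + h + 1) (h + 1) (by omega) (by omega))
  have hmem : (∅ : Finset ℕ) ∈ (Finset.range n).powerset.erase (Finset.range n) :=
    Finset.mem_erase.mpr ⟨(Finset.nonempty_range_iff.mpr hn.ne').ne_empty.symm,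
      Finset.empty_mem_powerset _⟩
  rw [ImSumTop, eq_top_iff, ← hempty]
  exact Finset.le_sup_of_le hmem le_rfl
end

section
/- Let C be a category equipped with a functor s : I → C, let A be an abelian category, and let T : C → A be a functor. Then ht_I(T) ≤ ht_⊕(T). -/
open CategoryTheory CategoryTheory.Limits

universe v u w z

variable {C : Type u} [Category.{v} C] {A : Type w} [Category.{z} A] [Abelian A]

/-- The alternating sum `Σ_{S ⊆ n̲} (−1)^{|S|} T(s((n̲ ∖ S)_λ))`, an endomorphism of
`T(s(m))`, whose image is the cross-effect `cr_λ(T)`.  Here `λ` is an ordered shifted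
partition of `m` of length `n`, and a subset of `m̲` is regarded as the corresponding
partial-identity endomorphism of `m` in `𝓘`. -/
noncomputable def crMap (s : Icat ⥤ C) (T : C ⥤ A) (n m : ℕ) (lam : ℕ → ℕ) :
    T.obj (s.obj m) ⟶ T.obj (s.obj m) :=
  ∑ S ∈ (Finset.Icc 1 n).powerset,
    ((-1 : ℤ) ^ S.card) •
      T.map (s.map (pId m (((Finset.Icc 1 n) \ S).biUnion (blkOf lam))))

/-- `HtOplusLE s T k` says that `ht_⊕(T) ≤ k − 1`: the cross-effect `cr_λ(T)` vanishes
for every ordered shifted partition `λ ⊢ m` with `λ_0 = 0` of length `n > k − 1`. -/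
def HtOplusLE (s : Icat ⥤ C) (T : C ⥤ A) (k : ℕ) : Prop :=
  ∀ (n m : ℕ) (lam : ℕ → ℕ), (∑ i ∈ Finset.range (n + 1), lam i = m) → lam 0 = 0 →
    k ≤ n → IsZero (Limits.image (crMap s T n m lam))

/-- `HtILE s T k` says that `ht_𝓘(T) ≤ k − 1`: the cross-effect `cr_λ(T)` vanishes for
every ordered shifted partition `λ ⊢ m` with `λ_1 = ⋯ = λ_n = 1` of length `n > k − 1`. -/
def HtILE (s : Icat ⥤ C) (T : C ⥤ A) (k : ℕ) : Prop :=
  ∀ (n m : ℕ) (lam : ℕ → ℕ), (∑ i ∈ Finset.range (n + 1), lam i = m) →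
    (∀ i, 1 ≤ i → i ≤ n → lam i = 1) →
    k ≤ n → IsZero (Limits.image (crMap s T n m lam))

/-- The height `ht_⊕(T)`.  Heights take values in `{-1, 0, 1, …, ∞}`; we encode such a
value `h` as `h + 1 : ℕ∞` (so `-1 ↦ 0`, `∞ ↦ ⊤`), an order isomorphism, so inequalities
and equalities of heights are faithfully represented. -/
noncomputable def htOplus (s : Icat ⥤ C) (T : C ⥤ A) : ℕ∞ :=
  sInf {e : ℕ∞ | ∃ k : ℕ, e = (k : ℕ∞) ∧ HtOplusLE s T k}

/-- The height `ht_𝓘(T)` (shifted by one, as for `htOplus`). -/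
noncomputable def htI (s : Icat ⥤ C) (T : C ⥤ A) : ℕ∞ :=
  sInf {e : ℕ∞ | ∃ k : ℕ, e = (k : ℕ∞) ∧ HtILE s T k}


section Aux

lemma isZero_image_iff {X Y : A} (f : X ⟶ Y) : IsZero (Limits.image f) ↔ f = 0 := by
  constructor
  · intro h
    have hι : Limits.image.ι f = 0 := h.eq_of_src _ _
    rw [← Limits.image.fac f, hι, Limits.comp_zero]
  · intro h
    exact (Limits.isZero_zero A).of_iso (Limits.imageZero' h)

lemma sum_lam_eq {n : ℕ} (lam : ℕ → ℕ) (hlam : ∀ i, 1 ≤ i → i ≤ n → lam i = 1)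
    {i : ℕ} (h1 : 1 ≤ i) (h2 : i ≤ n + 1) :
    ∑ j ∈ Finset.range i, lam j = lam 0 + (i - 1) := by
  induction i with
  | zero => omega
  | succ k ih =>
    rw [Finset.sum_range_succ]
    rcases Nat.eq_zero_or_pos k with hk | hk
    · subst hk; simp
    · rw [ih hk (by omega), hlam k hk (by omega)]
      omega

lemma sum_mu_eq (mu : ℕ → ℕ) (hmu0 : mu 0 = 0) {c : ℕ} (hmu1 : mu 1 = c)
    (hone : ∀ i, 2 ≤ i → mu i = 1)
    {i : ℕ} (h2 : 2 ≤ i) :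
    ∑ j ∈ Finset.range i, mu j = c + (i - 2) := by
  induction i with
  | zero => omega
  | succ k ih =>
    rw [Finset.sum_range_succ]
    rcases Nat.lt_or_ge k 2 with hk | hk
    · interval_cases k
      · omega
      · rw [show Finset.range 1 = {0} from rfl, Finset.sum_singleton, hmu0, hmu1]
        omega
    · rw [ih hk, hone k hk]
      omega

lemma htOplusLE_to_htILE (s : Icat ⥤ C) (T : C ⥤ A) (k : ℕ)
    (H : HtOplusLE s T k) : HtILE s T k := by
  intro n m lam hsum hone hkn
  rcases Nat.eq_zero_or_pos n with hn | hn
  · -- n = 0 : everything in sight is zero, since ht_⊕ ≤ -1 forces T(s(0)) = 0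
    subst hn
    have h0 : IsZero (Limits.image (crMap s T 0 0 (fun _ => 0))) :=
      H 0 0 (fun _ => 0) (by simp) rfl (by omega)
    have hcr0 : crMap s T 0 0 (fun _ => 0) = 𝟙 _ := by
      unfold crMap
      rw [show Finset.Icc 1 0 = (∅ : Finset ℕ) from rfl,
        Finset.powerset_empty, Finset.sum_singleton]
      have h1 : pId 0 (((∅ : Finset ℕ) \ ∅).biUnion (blkOf fun _ => 0)) = 𝟙 (0 : Icat) := by
        apply Subtype.ext
        show _ ∩ Finset.range 0 = Finset.range 0
        simp
      rw [h1]
      simp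
    rw [hcr0, isZero_image_iff] at h0
    have hobj : IsZero (T.obj (s.obj (0 : Icat))) := by
      rw [Limits.IsZero.iff_id_eq_zero]; exact h0
    have hcr : crMap s T 0 m lam = T.map (s.map (pId m ∅)) := by
      unfold crMap
      rw [show Finset.Icc 1 0 = (∅ : Finset ℕ) from rfl,
        Finset.powerset_empty, Finset.sum_singleton]
      simp
    have hfac : pId m ∅ = (⟨∅, by simp⟩ : (m : Icat) ⟶ (0 : Icat)) ≫
        (⟨∅, by simp⟩ : (0 : Icat) ⟶ (m : Icat)) := by
      apply Subtype.ext
      show (∅ : Finset ℕ) ∩ Finset.range m = (∅ : Finset ℕ) ∩ ∅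
      simp
    have hz : crMap s T 0 m lam = 0 := by
      rw [hcr, hfac, s.map_comp, T.map_comp,
        hobj.eq_of_tgt (T.map (s.map _)) 0, Limits.zero_comp]
    rw [isZero_image_iff, hz]
  · -- n ≥ 1 : merge λ₀ into the first block
    set mu : ℕ → ℕ := fun i => if i = 0 then 0 else if i = 1 then lam 0 + 1 else 1 with hmudef
    have hmu0 : mu 0 = 0 := rfl
    have hmu1 : mu 1 = lam 0 + 1 := rfl
    have hmu2 : ∀ i, 2 ≤ i → mu i = 1 := by
      intro i hi
      simp only [hmudef]
      rw [if_neg (by omega), if_neg (by omega)]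
    have hm : m = lam 0 + n := by
      rw [← hsum, sum_lam_eq lam hone (by omega) (le_refl _)]
      omega
    have hmusum : ∑ i ∈ Finset.range (n + 1), mu i = m := by
      rw [sum_mu_eq mu hmu0 hmu1 hmu2 (by omega)]
      omega
    -- block comparison
    have hblk : ∀ i, 1 ≤ i → i ≤ n →
        blkOf mu i ∩ Finset.Ico (lam 0) m = blkOf lam i := by
      intro i h1 h2
      have hLlo : ∑ j ∈ Finset.range i, lam j = lam 0 + (i - 1) :=
        sum_lam_eq lam hone h1 (by omega)
      have hLhi : ∑ j ∈ Finset.range (i + 1), lam j = lam 0 + i :=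
        by rw [sum_lam_eq lam hone (by omega) (by omega)]; omega
      have hMlo : ∑ j ∈ Finset.range i, mu j = if i = 1 then 0 else lam 0 + (i - 1) := by
        rcases Nat.lt_or_ge i 2 with hi | hi
        · have : i = 1 := by omega
          subst this
          simp [hmu0]
        · rw [if_neg (by omega), sum_mu_eq mu hmu0 hmu1 hmu2 hi]
          omega
      have hMhi : ∑ j ∈ Finset.range (i + 1), mu j = lam 0 + i := by
        rw [sum_mu_eq mu hmu0 hmu1 hmu2 (by omega)]
        omega
      unfold blkOf
      rw [hLlo, hLhi, hMlo, hMhi]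
      ext a
      simp only [Finset.mem_inter, Finset.mem_Ico]
      split <;> omega
    have hblkD : ∀ (R : Finset ℕ), R ⊆ Finset.Icc 1 n →
        (R.biUnion (blkOf mu)) ∩ Finset.Ico (lam 0) m = R.biUnion (blkOf lam) := by
      intro R hR
      ext a
      simp only [Finset.mem_inter, Finset.mem_biUnion]
      constructor
      · rintro ⟨⟨i, hiR, hia⟩, haD⟩
        refine ⟨i, hiR, ?_⟩
        have hi := Finset.mem_Icc.mp (hR hiR)
        rw [← hblk i hi.1 hi.2]
        exact Finset.mem_inter.mpr ⟨hia, haD⟩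
      · rintro ⟨i, hiR, hia⟩
        have hi := Finset.mem_Icc.mp (hR hiR)
        rw [← hblk i hi.1 hi.2] at hia
        have := Finset.mem_inter.mp hia
        exact ⟨⟨i, hiR, this.1⟩, this.2⟩
    -- the key factorisation
    have hfact : crMap s T n m lam =
        crMap s T n m mu ≫ T.map (s.map (pId m (Finset.Ico (lam 0) m))) := by
      unfold crMap
      rw [Preadditive.sum_comp]
      refine Finset.sum_congr rfl ?_
      intro S hS
      rw [Preadditive.zsmul_comp, ← T.map_comp, ← s.map_comp, pId_comp,
        hblkD _ (Finset.sdiff_subset.trans (Finset.subset_of_eq rfl))]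
    have hz : crMap s T n m mu = 0 := by
      rw [← isZero_image_iff]
      exact H n m mu hmusum hmu0 hkn
    rw [isZero_image_iff, hfact, hz, Limits.zero_comp]

end Aux

/-- for any category `C` equipped with a functor `s : 𝓘 ⥤ C`, any abelian
category `A` and any functor `T : C ⥤ A`, we have `ht_𝓘(T) ≤ ht_⊕(T)`. -/
theorem htI_le_htOplus (s : Icat ⥤ C) (T : C ⥤ A) : htI s T ≤ htOplus s T := by
  apply sInf_le_sInf
  rintro e ⟨k, rfl, hk⟩
  exact ⟨k, rfl, htOplusLE_to_htILE s T k hk⟩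
end

section
/- For every h ∈ {2,3,4,…} ∪ {∞} there exists a functor T_h : I → Ab (taking C = I and s = id_I) such that ht_I(T_h) = 1 but ht_⊕(T_h) = h. In particular, the inequality ht_I(T) ≤ ht_⊕(T) may be strict. -/
open CategoryTheory CategoryTheory.Limits

universe v u w z

variable {C : Type u} [Category.{v} C] {A : Type w} [Category.{z} A] [Abelian A]

/-!
Take for `T_h(m)` the free abelian group on the subsets `W ⊆ m̲` with `|W| ≤ h` that are not
intervals of length `≥ 2`, a subset `F : m → n` sending `W` to itself if `W ⊆ F` and to `0`
otherwise. By inclusion–exclusion, `cr_λ(T_h)` is the projection onto the span of those `W`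
lying in `{1}_λ ∪ ⋯ ∪ {n}_λ` and meeting every block. When all blocks are singletons the only
such `W` is an interval of length `n`, so `ht_𝓘(T_h) = 1`. A `W` meeting `n` disjoint blocks
has at least `n` elements, so `ht_⊕(T_h) ≤ h`; conversely the even numbers `{0, 2, …, 2k - 2}`
meet every block of `λ = (0, 2, …, 2)` of length `k ≤ h` and are not an interval, so
`ht_⊕(T_h) ≥ h`.
-/

open Finset Function

universe r

theorem isZero_image_iff_s12 {D : Type*} [Category D] [HasZeroMorphisms D] [HasZeroObject D]
    {X Y : D} (f : X ⟶ Y) [HasImage f] : IsZero (image f) ↔ f = 0 :=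
  ⟨fun hf => eq_zero_of_image_eq_zero (hf.eq_of_src _ _),
    fun hf => (isZero_zero D).of_iso (imageZero' hf)⟩

theorem sInf_setOf_natCast_eq {Q : ℕ → Prop} (a : ℕ∞) (hQ : ∀ k : ℕ, Q k ↔ a ≤ k) :
    sInf {e : ℕ∞ | ∃ k : ℕ, e = k ∧ Q k} = a := by
  refine le_antisymm ?_ (le_sInf ?_)
  · cases a with
    | top => exact le_top
    | coe n => exact sInf_le ⟨n, rfl, (hQ n).2 le_rfl⟩
  · rintro _ ⟨k, rfl, hk⟩
    exact (hQ k).1 hk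

theorem HtILE.mono {s : Icat ⥤ C} {T : C ⥤ A} {k k' : ℕ} (H : HtILE s T k) (hk : k ≤ k') :
    HtILE s T k' :=
  fun n m lam hm hlam hn => H n m lam hm hlam (hk.trans hn)

theorem HtOplusLE.mono {s : Icat ⥤ C} {T : C ⥤ A} {k k' : ℕ} (H : HtOplusLE s T k)
    (hk : k ≤ k') : HtOplusLE s T k' :=
  fun n m lam hm hlam hn => H n m lam hm hlam (hk.trans hn)

section InclusionExclusion

variable {ι α : Type*} [DecidableEq ι] [DecidableEq α] {B : ι → Finset α} {I S : Finset ι}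
  {W : Finset α}

theorem subset_biUnion_sdiff_iff (hB : Pairwise (Disjoint on B)) :
    W ⊆ (I \ S).biUnion B ↔ W ⊆ I.biUnion B ∧ ∀ i ∈ S, Disjoint W (B i) := by
  refine ⟨fun hW => ⟨hW.trans (biUnion_subset_biUnion_of_subset_left _ sdiff_subset),
    fun i hi => ?_⟩, fun ⟨hW, hdisj⟩ x hx => ?_⟩
  · rw [disjoint_left]
    intro x hxW hxi
    obtain ⟨j, hj, hxj⟩ := mem_biUnion.1 (hW hxW)
    have hij : i ≠ j := fun hij => (mem_sdiff.1 hj).2 (hij ▸ hi)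
    exact disjoint_left.1 (hB hij) hxi hxj
  · obtain ⟨j, hj, hxj⟩ := mem_biUnion.1 (hW hx)
    refine mem_biUnion.2 ⟨j, mem_sdiff.2 ⟨hj, fun hjS => ?_⟩, hxj⟩
    exact disjoint_left.1 (hdisj j hjS) hx hxj

theorem sum_powerset_neg_one_pow_card_ite_subset_biUnion (hB : Pairwise (Disjoint on B)) :
    (∑ S ∈ I.powerset, if W ⊆ (I \ S).biUnion B then (-1 : ℤ) ^ #S else 0) =
      if W ⊆ I.biUnion B ∧ ∀ i ∈ I, ¬ Disjoint W (B i) then 1 else 0 := by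
  by_cases hW : W ⊆ I.biUnion B
  · set D := {i ∈ I | Disjoint W (B i)}
    have hterm : ∀ S ∈ I.powerset, W ⊆ (I \ S).biUnion B ↔ S ∈ D.powerset := by
      intro S hS
      rw [subset_biUnion_sdiff_iff hB, mem_powerset]
      simp only [hW, true_and, D, subset_iff, mem_filter]
      exact ⟨fun h i hi => ⟨mem_powerset.1 hS hi, h i hi⟩, fun h i hi => (h hi).2⟩
    rw [sum_congr rfl fun S hS => if_congr (hterm S hS) rfl rfl, sum_ite_mem,
      inter_eq_right.2 (powerset_mono.2 (filter_subset _ _)), sum_powerset_neg_one_pow_card]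
    simp [filter_eq_empty_iff, hW]
  · rw [if_neg fun h => hW h.1]
    refine sum_eq_zero fun S hS => if_neg fun h => hW ?_
    exact ((subset_biUnion_sdiff_iff hB).1 h).1

end InclusionExclusion

theorem blkOf_pairwise_disjoint (lam : ℕ → ℕ) : Pairwise (Disjoint on blkOf lam) := by
  intro i j hij
  wlog hlt : i < j generalizing i j
  · exact (this hij.symm (by omega)).symm
  have : ∑ k ∈ range (i + 1), lam k ≤ ∑ k ∈ range j, lam k :=
    sum_le_sum_of_subset (range_subset_range.2 hlt)
  rw [onFun, disjoint_left]
  intro x hi hj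
  simp only [blkOf, mem_Ico] at hi hj
  omega

theorem blkOf_of_eq_const {lam : ℕ → ℕ} {n c : ℕ} (hc : ∀ i, 1 ≤ i → i ≤ n → lam i = c)
    {i : ℕ} (hi : i ∈ Icc 1 n) : blkOf lam i = Ico (lam 0 + c * (i - 1)) (lam 0 + c * i) := by
  have hsum : ∀ j ≤ n, ∑ k ∈ range (j + 1), lam k = lam 0 + c * j := by
    intro j hj
    induction j with
    | zero => simp
    | succ j ih => rw [sum_range_succ, ih (by omega), hc (j + 1) (by omega) hj]; ring
  obtain ⟨hi1, hin⟩ := mem_Icc.1 hi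
  obtain ⟨j, rfl⟩ := Nat.exists_eq_add_of_le' hi1
  rw [blkOf, hsum j (by omega), hsum (j + 1) hin, Nat.add_sub_cancel]

def MeetsExactlyBlocks (n : ℕ) (lam : ℕ → ℕ) (W : Finset ℕ) : Prop :=
  W ⊆ (Icc 1 n).biUnion (blkOf lam) ∧ ∀ i ∈ Icc 1 n, ¬ Disjoint W (blkOf lam i)

instance (n : ℕ) (lam : ℕ → ℕ) : DecidablePred (MeetsExactlyBlocks n lam) :=
  fun _ => inferInstanceAs (Decidable (_ ∧ _))

def IsLongInterval (S : Finset ℕ) : Prop :=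
  ∃ a b, a + 2 ≤ b ∧ S = Ico a b

theorem IsLongInterval.two_le_card {S : Finset ℕ} (hS : IsLongInterval S) : 2 ≤ #S := by
  obtain ⟨a, b, hab, rfl⟩ := hS
  rw [Nat.card_Ico]
  omega

namespace MeetsExactlyBlocks

variable {n : ℕ} {lam : ℕ → ℕ} {W : Finset ℕ}

theorem card_le (hW : MeetsExactlyBlocks n lam W) : n ≤ #W := by
  have hdisj : (Icc 1 n : Set ℕ).PairwiseDisjoint fun i => W ∩ blkOf lam i :=
    fun i _ j _ hij => (blkOf_pairwise_disjoint lam hij).mono inter_subset_right inter_subset_right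
  calc n = ∑ i ∈ Icc 1 n, 1 := by simp
    _ ≤ ∑ i ∈ Icc 1 n, #(W ∩ blkOf lam i) :=
      sum_le_sum fun i hi => card_pos.2 (not_disjoint_iff_nonempty_inter.1 (hW.2 i hi))
    _ = #((Icc 1 n).biUnion fun i => W ∩ blkOf lam i) := (card_biUnion hdisj).symm
    _ ≤ #W := card_le_card (biUnion_subset.2 fun _ _ => inter_subset_left)

theorem eq_Ico (hc : ∀ i, 1 ≤ i → i ≤ n → lam i = 1) (hW : MeetsExactlyBlocks n lam W) :
    W = Ico (lam 0) (lam 0 + n) := by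
  refine Subset.antisymm (fun x hx => ?_) (fun x hx => ?_)
  · obtain ⟨i, hi, hxi⟩ := mem_biUnion.1 (hW.1 hx)
    rw [blkOf_of_eq_const hc hi, mem_Ico] at hxi
    rw [mem_Icc] at hi
    rw [mem_Ico]
    omega
  · rw [mem_Ico] at hx
    have hi : x - lam 0 + 1 ∈ Icc 1 n := mem_Icc.2 ⟨by omega, by omega⟩
    obtain ⟨y, hyW, hy⟩ := not_disjoint_iff.1 (hW.2 _ hi)
    rw [blkOf_of_eq_const hc hi, mem_Ico] at hy
    obtain rfl : y = x := by omega
    exact hyW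

end MeetsExactlyBlocks

theorem meetsExactlyBlocks_image_two_mul (k : ℕ) :
    MeetsExactlyBlocks k (fun i => if i = 0 then 0 else 2) ((range k).image (2 * ·)) := by
  have hblk : ∀ i ∈ Icc 1 k,
      blkOf (fun i => if i = 0 then 0 else 2) i = Ico (2 * (i - 1)) (2 * i) := fun i hi => by
    simpa using blkOf_of_eq_const (lam := fun i => if i = 0 then 0 else 2) (c := 2)
      (fun j hj _ => if_neg (by omega)) hi
  refine ⟨fun x hx => ?_, fun i hi => not_disjoint_iff.2 ⟨2 * (i - 1), ?_, ?_⟩⟩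
  · obtain ⟨j, hj, rfl⟩ := mem_image.1 hx
    rw [mem_range] at hj
    have hj1 : j + 1 ∈ Icc 1 k := mem_Icc.2 ⟨by omega, hj⟩
    refine mem_biUnion.2 ⟨j + 1, hj1, ?_⟩
    rw [hblk _ hj1, mem_Ico]
    omega
  · exact mem_image.2 ⟨i - 1, mem_range.2 (by simp at hi; omega), rfl⟩
  · rw [hblk i hi, mem_Ico]
    simp at hi ⊢
    omega

theorem not_isLongInterval_image_two_mul (k : ℕ) :
    ¬ IsLongInterval ((range k).image (2 * ·)) := by
  rintro ⟨a, b, hab, heq⟩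
  have ha : a ∈ (range k).image (2 * ·) := heq ▸ mem_Ico.2 ⟨le_rfl, by omega⟩
  have ha1 : a + 1 ∈ (range k).image (2 * ·) := heq ▸ mem_Ico.2 ⟨by omega, by omega⟩
  obtain ⟨i, -, hi⟩ := mem_image.1 ha
  obtain ⟨j, -, hj⟩ := mem_image.1 ha1
  omega

section SubsetFunctor

variable (P : Finset ℕ → Prop)

/- `T(m)` is placed inside the free abelian group on all finite subsets of `ℕ`, so that every
`T(F)` is the same map `x ↦ x.filter (· ⊆ F)`; the `ULift` makes the functor universe
polymorphic. -/
noncomputable def subsetSpan (m : ℕ) : AddSubgroup (ULift.{r} (Finset ℕ) →₀ ℤ) :=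
  (Finsupp.supported ℤ ℤ {S | S.down ⊆ range m ∧ P S.down}).toAddSubgroup

variable {P} in
theorem mem_subsetSpan {m : ℕ} {x : ULift.{r} (Finset ℕ) →₀ ℤ} :
    x ∈ subsetSpan P m ↔ ∀ S, x S ≠ 0 → S.down ⊆ range m ∧ P S.down := by
  simp only [subsetSpan, Submodule.mem_toAddSubgroup, Finsupp.mem_supported', Set.mem_ofPred_eq]
  exact forall_congr' fun S => not_imp_comm

noncomputable def subsetSpanRestrict {m n : Icat} (f : m ⟶ n) :
    subsetSpan.{r} P m →+ subsetSpan.{r} P n :=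
  AddMonoidHom.mk' (fun x => ⟨x.1.filter (·.down ⊆ f.1), mem_subsetSpan.2 fun S hS => by
      have hSf : S.down ⊆ f.1 := by_contra fun h => hS (Finsupp.filter_apply_neg _ _ h)
      rw [Finsupp.filter_apply, if_pos hSf] at hS
      refine ⟨hSf.trans (f.2.trans (range_subset_range.2 (min_le_right _ _))), ?_⟩
      exact (mem_subsetSpan.1 x.2 S hS).2⟩)
    fun _ _ => Subtype.ext Finsupp.filter_add

noncomputable def subsetFunctor : Icat ⥤ AddCommGrpCat.{r} where
  obj m := .of (subsetSpan P m)
  map f := AddCommGrpCat.ofHom (subsetSpanRestrict P f)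
  map_id n := by
    ext x S
    change (if S.down ⊆ range n then x.1 S else 0) = x.1 S
    split_ifs with hS
    · rfl
    · by_contra hx
      exact hS (mem_subsetSpan.1 x.2 S (Ne.symm hx)).1
  map_comp f g := by
    ext x S
    change (if S.down ⊆ f.1 ∩ g.1 then x.1 S else 0) =
      if S.down ⊆ g.1 then (if S.down ⊆ f.1 then x.1 S else 0) else 0
    simp only [subset_inter_iff, ite_and]
    split_ifs <;> rfl

theorem crMap_subsetFunctor_apply (n m : ℕ) (lam : ℕ → ℕ) (x : (subsetFunctor.{r} P).obj m)
    (W : ULift.{r} (Finset ℕ)) :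
    ((crMap (𝟭 Icat) (subsetFunctor P) n m lam).hom x).1 W =
      if MeetsExactlyBlocks n lam W.down then x.1 W else 0 := by
  have hsum : ((crMap (𝟭 Icat) (subsetFunctor P) n m lam).hom x).1 W =
      ∑ S ∈ (Icc 1 n).powerset, (-1 : ℤ) ^ #S *
        if W.down ⊆ ((Icc 1 n \ S).biUnion (blkOf lam)) ∩ range m then x.1 W else 0 := by
    have hom_sum : ∀ {X Y : AddCommGrpCat.{r}} (f : Finset ℕ → (X ⟶ Y)),
        (∑ S ∈ (Icc 1 n).powerset, f S).hom = ∑ S ∈ (Icc 1 n).powerset, (f S).hom :=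
      fun f => map_sum AddCommGrpCat.homAddEquiv f _
    rw [crMap, hom_sum, AddMonoidHom.finsetSum_apply]
    erw [AddSubgroup.val_finsetSum, Finsupp.finsetSum_apply]
    rfl
  by_cases hx : x.1 W = 0
  · simp [hsum, hx]
  have hWm : W.down ⊆ range m := (mem_subsetSpan.1 x.2 W hx).1
  calc _ = (∑ S ∈ (Icc 1 n).powerset,
        if W.down ⊆ (Icc 1 n \ S).biUnion (blkOf lam) then (-1 : ℤ) ^ #S else 0) * x.1 W := by
        rw [hsum, sum_mul]
        refine sum_congr rfl fun S _ => ?_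
        simp only [subset_inter_iff, hWm, and_true, mul_ite, mul_zero, ite_mul, zero_mul]
    _ = _ := by
        rw [sum_powerset_neg_one_pow_card_ite_subset_biUnion (blkOf_pairwise_disjoint lam),
          boole_mul]
        rfl

theorem crMap_subsetFunctor_eq_zero_iff (n m : ℕ) (lam : ℕ → ℕ) :
    crMap (𝟭 Icat) (subsetFunctor.{r} P) n m lam = 0 ↔
      ∀ W ⊆ range m, P W → ¬ MeetsExactlyBlocks n lam W := by
  refine ⟨fun h W hWm hPW hW => ?_, fun h => ?_⟩
  · let x : (subsetFunctor.{r} P).obj m := ⟨Finsupp.single ⟨W⟩ 1, mem_subsetSpan.2 fun S hS => by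
      obtain rfl : S = ⟨W⟩ := by by_contra hSW; exact hS (Finsupp.single_eq_of_ne hSW)
      exact ⟨hWm, hPW⟩⟩
    have hx := crMap_subsetFunctor_apply P n m lam x ⟨W⟩
    rw [h, if_pos hW] at hx
    exact zero_ne_one (hx.trans Finsupp.single_eq_same)
  · ext x : 2
    refine Subtype.ext (Finsupp.ext fun W => ?_)
    change _ = 0
    rw [crMap_subsetFunctor_apply, ite_eq_right_iff]
    intro hW
    by_contra hx
    obtain ⟨hWm, hPW⟩ := mem_subsetSpan.1 x.2 W hx
    exact h _ hWm hPW hW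

theorem htILE_subsetFunctor_two (hP : ∀ S, P S → ¬ IsLongInterval S) :
    HtILE (𝟭 Icat) (subsetFunctor.{r} P) 2 := by
  intro n m lam _ hlam hn
  rw [isZero_image_iff_s12, crMap_subsetFunctor_eq_zero_iff]
  exact fun W _ hPW hW => hP W hPW ⟨lam 0, lam 0 + n, by omega, hW.eq_Ico hlam⟩

theorem not_htILE_subsetFunctor_one (hP : P {0}) : ¬ HtILE (𝟭 Icat) (subsetFunctor.{r} P) 1 := by
  intro H
  have h0 := H 1 1 (fun i => if i = 0 then 0 else 1) (by decide)
    (fun i hi _ => if_neg (by omega)) le_rfl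
  rw [isZero_image_iff_s12, crMap_subsetFunctor_eq_zero_iff] at h0
  exact h0 {0} (by simp) hP (by decide)

theorem htI_subsetFunctor (hlong : ∀ S, P S → ¬ IsLongInterval S) (h0 : P {0}) :
    htI (𝟭 Icat) (subsetFunctor.{r} P) = 2 := by
  refine sInf_setOf_natCast_eq 2 fun k => ⟨fun hk => ?_, fun hk => ?_⟩
  · by_contra hlt
    have hk2 : k < 2 := by exact_mod_cast not_le.1 hlt
    exact not_htILE_subsetFunctor_one P h0 (hk.mono (by omega))
  · exact (htILE_subsetFunctor_two P hlong).mono (by exact_mod_cast hk)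

theorem htOplusLE_subsetFunctor_of_card_le {H : ℕ} (hP : ∀ S, P S → #S ≤ H) :
    HtOplusLE (𝟭 Icat) (subsetFunctor.{r} P) (H + 1) := by
  intro n m lam _ _ hn
  rw [isZero_image_iff_s12, crMap_subsetFunctor_eq_zero_iff]
  intro W _ hPW hW
  have := hW.card_le
  have := hP W hPW
  omega

theorem not_htOplusLE_subsetFunctor {k : ℕ} (hP : P ((range k).image (2 * ·))) :
    ¬ HtOplusLE (𝟭 Icat) (subsetFunctor.{r} P) k := by
  intro H
  have hsum : ∑ i ∈ range (k + 1), (if i = 0 then 0 else 2) = 2 * k := by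
    simp [sum_range_succ', mul_comm]
  have h0 := H k (2 * k) (fun i => if i = 0 then 0 else 2) hsum rfl le_rfl
  rw [isZero_image_iff_s12, crMap_subsetFunctor_eq_zero_iff] at h0
  refine h0 _ (fun x hx => ?_) hP (meetsExactlyBlocks_image_two_mul k)
  obtain ⟨j, hj, rfl⟩ := mem_image.1 hx
  simp only [mem_range] at hj ⊢
  omega

end SubsetFunctor

noncomputable def nonIntervalFunctor (h : ℕ∞) : Icat ⥤ AddCommGrpCat.{r} :=
  subsetFunctor fun S => (#S : ℕ∞) ≤ h ∧ ¬ IsLongInterval S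

theorem htI_nonIntervalFunctor {h : ℕ∞} (hh : 1 ≤ h) :
    htI (𝟭 Icat) (nonIntervalFunctor.{r} h) = 2 :=
  htI_subsetFunctor _ (fun _ hS => hS.2)
    ⟨by simpa using hh, fun hS => absurd hS.two_le_card (by simp)⟩

theorem htOplus_nonIntervalFunctor {h : ℕ∞} (hh : 2 ≤ h) :
    htOplus (𝟭 Icat) (nonIntervalFunctor.{r} h) = h + 1 := by
  refine sInf_setOf_natCast_eq (h + 1) fun k => ⟨fun hk => ?_, fun hk => ?_⟩
  · by_contra hlt
    have hkh : (k : ℕ∞) ≤ h := (ENat.lt_add_one_iff' (ENat.natCast_ne_top k)).1 (not_le.1 hlt)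
    refine not_htOplusLE_subsetFunctor _ ⟨?_, not_isLongInterval_image_two_mul _⟩
      (hk.mono (le_max_left k 2))
    rw [card_image_of_injective _ (mul_right_injective₀ (M₀ := ℕ) two_ne_zero), card_range,
      Nat.mono_cast.map_max]
    exact max_le hkh hh
  · lift h to ℕ using ne_top_of_le_ne_top (ENat.natCast_ne_top k) (le_self_add.trans hk)
    exact (htOplusLE_subsetFunctor_of_card_le _ fun S hS => by exact_mod_cast hS.1).mono
      (by exact_mod_cast hk)

/-- Statement 14: for every `h ∈ {2, 3, …} ∪ {∞}` there is a functor `T_h : 𝓘 ⥤ Ab`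
(taking `C = 𝓘` and `s = 𝟭 𝓘`) with `ht_𝓘(T_h) = 1` but `ht_⊕(T_h) = h`; in particular
the inequality `ht_𝓘 ≤ ht_⊕` may be strict.  (Recall that heights are encoded with a
shift by one, so `ht_𝓘(T_h) = 1` reads `htI _ T_h = 2` and `ht_⊕(T_h) = h` reads
`htOplus _ T_h = h + 1`, with `⊤ + 1 = ⊤`.) -/
theorem exists_htI_lt_htOplus (h : ℕ∞) (hh : 2 ≤ h) :
    ∃ T : Icat ⥤ AddCommGrpCat, htI (𝟭 Icat) T = 2 ∧ htOplus (𝟭 Icat) T = h + 1 :=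
  ⟨nonIntervalFunctor h, htI_nonIntervalFunctor (one_le_two.trans hh),
    htOplus_nonIntervalFunctor hh⟩
end
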